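/- arXiv:2601.15173 — 6 statements merged into one kernel-verified Lean document; each statement's English description precedes it below -/
import Mathlib

section
/- Let i ∈ {1,…,d} and let I be an i-element subset of {1,…,d}. Then, identifying the coordinate subspace L_I with ℝ^i by restricting to the coordinates in I, one has T_d ∩ L_I = S((1/(d−i+1), 1, …, 1)), the weighted simplex in ℝ^i with weight vector (1/(d−i+1), 1, …, 1) ∈ ℝ^{i+1}. -/
/-- The weighted terminal simplex `conv(-η₀ 𝟙, (η_j e_j)_j)` over an index type `ι`. -/
def wSimplex {ι : Type*} [Fintype ι] [DecidableEq ι] (η0 : ℝ) (η : ι → ℝ) : Set (ι → ℝ) :=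
  convexHull ℝ (insert (fun _ => -η0) (Set.range fun j : ι => Pi.single j (η j)))

/-- The standard terminal simplex `T_d = conv(-𝟙_d, e_1, …, e_d) ⊆ ℝ^d`. -/
def stdTerminal (d : ℕ) : Set (Fin d → ℝ) :=
  convexHull ℝ (insert (fun _ => (-1 : ℝ)) (Set.range fun j : Fin d => Pi.single j (1 : ℝ)))

open Finset

lemma mem_convexHull_range_iff' {E : Type*} [AddCommGroup E] [Module ℝ E]
    {κ : Type*} [Fintype κ] (g : κ → E) (x : E) :
    x ∈ convexHull ℝ (Set.range g) ↔
      ∃ w : κ → ℝ, (∀ k, 0 ≤ w k) ∧ ∑ k, w k = 1 ∧ ∑ k, w k • g k = x := by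
  classical
  constructor
  · rw [convexHull_range_eq_exists_affineCombination]
    rintro ⟨s, w, h0, h1, rfl⟩
    refine ⟨fun k => if k ∈ s then w k else 0,
      fun k => by dsimp only; split_ifs with h; exacts [h0 k h, le_rfl], ?_, ?_⟩
    · rw [Finset.sum_ite_mem, Finset.univ_inter, h1]
    · rw [affineCombination_eq_linear_combination s g w h1]
      simp only [ite_smul, zero_smul]
      rw [Finset.sum_ite_mem, Finset.univ_inter]
  · rintro ⟨w, h0, h1, rfl⟩
    exact mem_convexHull_of_exists_fintype w g h0 h1 (fun k => ⟨k, rfl⟩) rfl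

lemma range_optionElim' {E ι : Type*} (p : E) (f : ι → E) :
    Set.range (fun o : Option ι => o.elim p f) = insert p (Set.range f) := by
  ext y; constructor
  · rintro ⟨o, rfl⟩
    cases o with
    | none => exact Set.mem_insert _ _
    | some j => exact Set.mem_insert_of_mem _ ⟨j, rfl⟩
  · rintro (rfl | ⟨j, rfl⟩)
    exacts [⟨none, rfl⟩, ⟨some j, rfl⟩]

lemma mem_wSimplex_iff' {ι : Type*} [Fintype ι] [DecidableEq ι] (η0 : ℝ) (x : ι → ℝ) :
    x ∈ wSimplex η0 (fun _ => 1) ↔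
      ∃ (a : ℝ) (w : ι → ℝ), 0 ≤ a ∧ (∀ j, 0 ≤ w j) ∧ a + ∑ j, w j = 1 ∧
        ∀ j, x j = w j - a * η0 := by
  have hr : wSimplex η0 (fun _ : ι => (1 : ℝ)) =
      convexHull ℝ (Set.range fun o : Option ι =>
        o.elim (fun _ => -η0) (fun j => Pi.single j 1)) := by
    rw [wSimplex, range_optionElim']
  rw [hr, mem_convexHull_range_iff']
  constructor
  · rintro ⟨W, h0, h1, rfl⟩
    refine ⟨W none, fun j => W (some j), h0 none, fun j => h0 (some j), ?_, ?_⟩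
    · rw [← h1, Fintype.sum_option]
    · intro j
      simp [Fintype.sum_option, Finset.sum_apply, Pi.single_apply, mul_ite]
      ring
  · rintro ⟨a, w, ha, hw, hsum, hx⟩
    refine ⟨fun o => o.elim a w, fun o => by cases o <;> simp [ha, hw], ?_, ?_⟩
    · rw [Fintype.sum_option]; exact hsum
    · funext j
      simp [Fintype.sum_option, Finset.sum_apply, Pi.single_apply, mul_ite, hx j]
      ring

lemma mem_stdTerminal_iff' (d : ℕ) (x : Fin d → ℝ) :
    x ∈ stdTerminal d ↔
      ∃ (a : ℝ) (w : Fin d → ℝ), 0 ≤ a ∧ (∀ j, 0 ≤ w j) ∧ a + ∑ j, w j = 1 ∧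
        ∀ j, x j = w j - a := by
  have h : stdTerminal d = wSimplex 1 (fun _ => 1) := rfl
  rw [h, mem_wSimplex_iff']
  simp [mul_one]

/-- **Corollary (sections of the terminal simplex).** For an `i`-element subset
`I ⊆ {1,…,d}`, identifying `L_I` with `ℝ^i` via the order isomorphism `Fin i ≃o I`,
we get `T_d ∩ L_I = S((1/(d-i+1), 1, …, 1))`. -/
theorem stdTerminal_inter_coordSubspace
    (d i : ℕ) (hi : 1 ≤ i) (hid : i ≤ d)
    (I : Finset (Fin d)) (hI : I.card = i) :
    (fun x : Fin d → ℝ => fun t : Fin i => x ((I.orderIsoOfFin hI t : Fin d))) ''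
        (stdTerminal d ∩ {x | ∀ j ∉ I, x j = 0}) =
      wSimplex (((d : ℝ) - (i : ℝ) + 1)⁻¹) (fun _ : Fin i => (1 : ℝ)) := by
  set σ := I.orderIsoOfFin hI with hσ
  have hNcast : (d : ℝ) - (i : ℝ) + 1 = ((d - i : ℕ) : ℝ) + 1 := by
    rw [Nat.cast_sub hid]
  have hNpos : (0 : ℝ) < ((d - i : ℕ) : ℝ) + 1 := by positivity
  have hsum_I : ∀ w : Fin d → ℝ, ∑ t : Fin i, w (σ t) = ∑ j ∈ I, w j := by
    intro w
    rw [← Finset.sum_coe_sort I w]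
    exact Fintype.sum_equiv σ.toEquiv _ _ (fun t => rfl)
  have hcard_compl : Iᶜ.card = d - i := by
    rw [Finset.card_compl, hI, Fintype.card_fin]
  ext y
  constructor
  · rintro ⟨x, ⟨hT, hZ⟩, rfl⟩
    rw [mem_stdTerminal_iff'] at hT
    obtain ⟨a, w, ha, hw, hsum, hx⟩ := hT
    have hwa : ∀ j ∉ I, w j = a := by
      intro j hj
      have := hx j
      rw [hZ j hj] at this
      linarith
    have hsplit : ∑ j, w j = ∑ j ∈ I, w j + ((d - i : ℕ) : ℝ) * a := by
      rw [← Finset.sum_add_sum_compl I w]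
      congr 1
      rw [Finset.sum_congr rfl (fun j hj => hwa j (Finset.mem_compl.mp hj)),
        Finset.sum_const, hcard_compl, nsmul_eq_mul]
    rw [mem_wSimplex_iff']
    refine ⟨(((d - i : ℕ) : ℝ) + 1) * a, fun t => w (σ t), by positivity,
      fun t => hw _, ?_, ?_⟩
    · rw [hsum_I w]
      rw [hsplit] at hsum
      ring_nf
      ring_nf at hsum
      linarith
    · intro t
      show x (σ t) = w (σ t) - (((d - i : ℕ) : ℝ) + 1) * a * ((d : ℝ) - (i : ℝ) + 1)⁻¹
      rw [hx (σ t), hNcast, mul_comm (((d - i : ℕ) : ℝ) + 1) a, mul_assoc,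
        mul_inv_cancel₀ hNpos.ne', mul_one]
  · intro hy
    rw [mem_wSimplex_iff'] at hy
    obtain ⟨a, w, ha, hw, hsum, hx⟩ := hy
    have hη : (0:ℝ) ≤ ((d : ℝ) - (i : ℝ) + 1)⁻¹ := by
      rw [hNcast]; positivity
    set b : ℝ := a * ((d : ℝ) - (i : ℝ) + 1)⁻¹ with hb
    have hb0 : 0 ≤ b := mul_nonneg ha hη
    set W : Fin d → ℝ := fun j => if h : j ∈ I then w (σ.symm ⟨j, h⟩) else b with hW
    have hWσ : ∀ t : Fin i, W ((σ t : Fin d)) = w t := by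
      intro t
      have hmem : (σ t : Fin d) ∈ I := (σ t).2
      rw [hW]
      dsimp only
      rw [dif_pos hmem]
      congr 1
      have he : (⟨(σ t : Fin d), hmem⟩ : {x // x ∈ I}) = σ t := Subtype.ext rfl
      rw [he]
      exact σ.symm_apply_apply t
    refine ⟨fun j => W j - b, ⟨?_, ?_⟩, ?_⟩
    · rw [mem_stdTerminal_iff']
      refine ⟨b, W, hb0, fun j => ?_, ?_, fun j => rfl⟩
      · by_cases h : j ∈ I <;> simp [hW, h, hw, hb0]
      · have h1 : ∑ j ∈ I, W j = ∑ t : Fin i, w t := by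
          rw [← hsum_I W]
          exact Fintype.sum_congr _ _ (fun t => hWσ t)
        have h2 : ∑ j ∈ Iᶜ, W j = ((d - i : ℕ) : ℝ) * b := by
          rw [Finset.sum_congr rfl (fun j hj => by
            simp only [hW]
            rw [dif_neg (Finset.mem_compl.mp hj)]),
            Finset.sum_const, hcard_compl, nsmul_eq_mul]
        rw [← Finset.sum_add_sum_compl I W, h1, h2]
        have key : b * (((d : ℝ) - (i : ℝ)) + 1) = a := by
          rw [hb, mul_assoc, inv_mul_cancel₀ (by rw [hNcast]; exact hNpos.ne'), mul_one]
        rw [hNcast] at key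
        ring_nf
        ring_nf at key hsum
        linarith
    · intro j hj
      show W j - b = 0
      rw [hW]
      dsimp only
      rw [dif_neg hj, sub_self]
    · funext t
      show W (σ t) - b = y t
      rw [hWσ t, hx t]
end

section
/- For every d ≥ 2 and every i ∈ {1,…,d−1}, the covering minima of standard terminal simplices satisfy μ_i(T_d) ≤ max { μ_i(T_{d−1}), μ_{i−1}(T_{d−1}) + d/(d+1) }. -/
open scoped Pointwise

/-- The `i`-th covering minimum of `K` with respect to a lattice given as a set `L`. -/
noncomputable def covMin {E : Type*} [AddCommGroup E] [Module ℝ E]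
    (i : ℕ) (K L : Set E) : ℝ :=
  sInf {μ : ℝ | 0 ≤ μ ∧ ∀ U : AffineSubspace ℝ E, (U : Set E).Nonempty →
    Module.finrank ℝ U.direction = Module.finrank ℝ E - i →
    ((μ • K + L) ∩ (U : Set E)).Nonempty}

/-- The integer lattice `ℤ^d` inside `ℝ^d`. -/
def intLat (d : ℕ) : Set (Fin d → ℝ) := {x | ∀ j, ∃ m : ℤ, x j = (m : ℝ)}

/-! Forget the last coordinate, `π : ℝ^d → ℝ^(d-1)`. Over a point `x ∈ ν T_(d-1)` the fibre of
`μ T_d` is nonempty as soon as `ν ≤ μ`, and contains a vertical segment of length `1` as soon as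
`ν + d/(d+1) ≤ μ`. Let `U ⊆ ℝ^d` be an affine subspace of codimension `i`. If `U` contains the
vertical direction `e_d`, then `π U` has codimension `i` in `ℝ^(d-1)`, so it meets
`ν T_(d-1) + ℤ^(d-1)` for any `ν > μ_i(T_(d-1))`, and the meeting point lifts into `U` inside
`μ T_d + ℤ^d`. Otherwise `π` is injective on `U`, `π U` has codimension `i - 1`, and it meets
`ν T_(d-1) + ℤ^(d-1)` for `ν > μ_(i-1)(T_(d-1))`; the point of `U` above the meeting point is an
integer vertical translate of a point of the length-one segment in the fibre. -/

section CoveringMinima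

variable {E : Type*} [AddCommGroup E] [Module ℝ E] {i : ℕ} {K L : Set E} {μ a : ℝ}

-- `covMin i K L` is by definition the infimum of the `μ` with `MeetsFlats i K L μ`.
def MeetsFlats (i : ℕ) (K L : Set E) (μ : ℝ) : Prop :=
  0 ≤ μ ∧ ∀ U : AffineSubspace ℝ E, (U : Set E).Nonempty →
    Module.finrank ℝ U.direction = Module.finrank ℝ E - i → ((μ • K + L) ∩ U).Nonempty

theorem covMin_le (h : MeetsFlats i K L μ) : covMin i K L ≤ μ :=
  csInf_le ⟨0, fun _ hν => hν.1⟩ h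

theorem covMin_le_of_forall_lt (h : ∀ μ, a < μ → MeetsFlats i K L μ) : covMin i K L ≤ a :=
  le_of_forall_gt_imp_ge_of_dense fun μ hμ => covMin_le (h μ hμ)

theorem exists_meetsFlats_lt (hne : ∃ ν, MeetsFlats i K L ν) (h : covMin i K L < μ) :
    ∃ ν, MeetsFlats i K L ν ∧ ν < μ :=
  exists_lt_of_csInf_lt hne h

theorem meetsFlats_of_smul_add_eq_univ (hμ : 0 ≤ μ) (h : μ • K + L = Set.univ) :
    MeetsFlats i K L μ :=
  ⟨hμ, fun U hU _ => by rwa [h, Set.univ_inter]⟩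

end CoveringMinima

theorem Submodule.finrank_map_add_finrank_inf_ker {K V W : Type*} [DivisionRing K]
    [AddCommGroup V] [Module K V] [AddCommGroup W] [Module K W] (f : V →ₗ[K] W)
    (P : Submodule K V) [FiniteDimensional K P] :
    Module.finrank K (P.map f) + Module.finrank K ↥(P ⊓ LinearMap.ker f) =
      Module.finrank K P := by
  have := LinearMap.finrank_range_add_finrank_ker (f.domRestrict P)
  rwa [LinearMap.range_domRestrict, LinearMap.ker_domRestrict,
    ← Submodule.finrank_map_subtype_eq, Submodule.map_comap_subtype] at this

theorem Fin.snoc_add_snoc {n : ℕ} {α : Type*} [Add α] (a b : Fin n → α) (x y : α) :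
    (Fin.snoc a x : Fin (n + 1) → α) + Fin.snoc b y = Fin.snoc (a + b) (x + y) := by
  ext j
  refine Fin.lastCases ?_ (fun j => ?_) j <;> simp

theorem Fin.snoc_init_eq_smul_single_add {n : ℕ} {R : Type*} [Ring R] (u : Fin (n + 1) → R)
    (x : R) : Fin.snoc (Fin.init u) x = (x - u (Fin.last n)) • Pi.single (Fin.last n) 1 + u := by
  ext j
  refine Fin.lastCases ?_ (fun j => ?_) j
  · simp
  · simp [Fin.init, (Fin.castSucc_lt_last j).ne]

section TerminalSimplex

variable {k : ℕ} {μ : ℝ} {x : Fin k → ℝ}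

theorem convex_setOf_sum_le_and_forall (k : ℕ) :
    Convex ℝ {x : Fin k → ℝ | ∑ j, x j ≤ 1 ∧ ∀ j, ∑ l, x l ≤ ((k : ℝ) + 1) * x j + 1} := by
  intro a ha b hb s t hs ht hst
  have hsum : ∑ j, (s • a + t • b) j = s * ∑ j, a j + t * ∑ j, b j := by
    simp [Finset.sum_add_distrib, Finset.mul_sum]
  refine ⟨?_, fun j => ?_⟩
  · rw [hsum]; nlinarith [ha.1, hb.1]
  · rw [hsum]
    simp only [Pi.add_apply, Pi.smul_apply, smul_eq_mul]
    nlinarith [ha.2 j, hb.2 j]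

theorem mem_stdTerminal_iff :
    x ∈ stdTerminal k ↔ ∑ j, x j ≤ 1 ∧ ∀ j, ∑ l, x l ≤ ((k : ℝ) + 1) * x j + 1 := by
  classical
  constructor
  · refine fun hx => convexHull_min ?_ (convex_setOf_sum_le_and_forall k) hx
    rintro y (rfl | ⟨j, rfl⟩)
    · refine ⟨by simp; linarith [(k.cast_nonneg : (0 : ℝ) ≤ k)], fun j => ?_⟩
      simp only [Finset.sum_const, Finset.card_univ, Fintype.card_fin, nsmul_eq_mul]
      linarith
    · refine ⟨by simp, fun l => ?_⟩
      rcases eq_or_ne l j with rfl | hne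
      · simp; positivity
      · simp [hne]
  · rintro ⟨hsum, hfacet⟩
    -- barycentric coordinates: `w₀` on `-𝟙` and `x j + w₀` on `e j`
    set w₀ := (1 - ∑ j, x j) / ((k : ℝ) + 1)
    have hw₀ : ((k : ℝ) + 1) * w₀ = 1 - ∑ j, x j := by
      simp only [w₀]; field_simp
    refine mem_convexHull_of_exists_fintype (ι := Option (Fin k))
      (fun o => o.elim w₀ fun j => x j + w₀)
      (fun o => o.elim (fun _ => -1) fun j => Pi.single j 1) ?_ ?_ ?_ ?_
    · rintro (_ | j)
      · exact div_nonneg (by linarith) (by positivity)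
      · have := hfacet j
        simp only [Option.elim]
        nlinarith
    · simp only [Fintype.sum_option, Option.elim, Finset.sum_add_distrib, Finset.sum_const,
        Finset.card_univ, Fintype.card_fin, nsmul_eq_mul]
      linarith
    · rintro (_ | j)
      · exact Set.mem_insert _ _
      · exact Set.mem_insert_of_mem _ ⟨j, rfl⟩
    · funext l
      simp [Fintype.sum_option, Pi.single_apply]

theorem mem_smul_stdTerminal_iff (hμ : 0 < μ) :
    x ∈ μ • stdTerminal k ↔ ∑ j, x j ≤ μ ∧ ∀ j, ∑ l, x l ≤ ((k : ℝ) + 1) * x j + μ := by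
  rw [Set.mem_smul_set_iff_inv_smul_mem₀ hμ.ne', mem_stdTerminal_iff]
  simp only [Pi.smul_apply, smul_eq_mul, ← Finset.mul_sum, inv_mul_le_iff₀ hμ, mul_add,
    mul_one, mul_left_comm μ, inv_mul_cancel_left₀ hμ.ne']

theorem sum_le_and_sum_le_of_mem_smul_stdTerminal (hμ : 0 ≤ μ) (hx : x ∈ μ • stdTerminal k) :
    ∑ j, x j ≤ μ ∧ ∀ j, ∑ l, x l ≤ ((k : ℝ) + 1) * x j + μ := by
  rcases hμ.eq_or_lt with rfl | hμ
  · have hne : (stdTerminal k).Nonempty := ⟨_, subset_convexHull ℝ _ (Set.mem_insert _ _)⟩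
    rw [Set.zero_smul_set hne, Set.mem_zero] at hx
    simp [hx]
  · exact (mem_smul_stdTerminal_iff hμ).1 hx

end TerminalSimplex

theorem smul_stdTerminal_add_intLat_eq_univ (k : ℕ) :
    ((k : ℝ) + 1) • stdTerminal k + intLat k = Set.univ := by
  refine Set.eq_univ_of_forall fun u => ⟨fun j => Int.fract (u j), ?_, fun j => (⌊u j⌋ : ℝ),
    fun j => ⟨⌊u j⌋, rfl⟩, funext fun j => Int.fract_add_floor (u j)⟩
  have hsum : ∑ j, Int.fract (u j) ≤ k := by
    simpa using Finset.sum_le_sum fun j (_ : j ∈ Finset.univ) => (Int.fract_lt_one (u j)).le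
  rw [mem_smul_stdTerminal_iff (by positivity)]
  refine ⟨by linarith, fun j => ?_⟩
  nlinarith [Int.fract_nonneg (u j)]

theorem exists_meetsFlats_stdTerminal (i k : ℕ) :
    ∃ μ, MeetsFlats i (stdTerminal k) (intLat k) μ :=
  ⟨_, meetsFlats_of_smul_add_eq_univ (by positivity) (smul_stdTerminal_add_intLat_eq_univ k)⟩

section DropLast

variable {n : ℕ}

def dropLast (n : ℕ) : (Fin (n + 1) → ℝ) →ₗ[ℝ] Fin n → ℝ :=
  LinearMap.funLeft ℝ ℝ Fin.castSucc

@[simp]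
theorem dropLast_apply (u : Fin (n + 1) → ℝ) : dropLast n u = Fin.init u := rfl

theorem ker_dropLast : LinearMap.ker (dropLast n) = ℝ ∙ Pi.single (Fin.last n) 1 := by
  ext u
  rw [LinearMap.mem_ker, dropLast_apply, Submodule.mem_span_singleton]
  refine ⟨fun hu => ⟨u (Fin.last n), ?_⟩, fun ⟨c, hc⟩ => ?_⟩ <;> ext j
  · refine Fin.lastCases (by simp) (fun j => ?_) j
    simpa [(Fin.castSucc_lt_last j).ne, Fin.init, eq_comm] using congrFun hu j
  · simp [← hc, Fin.init, (Fin.castSucc_lt_last j).ne]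

theorem finrank_map_dropLast_of_mem {P : Submodule ℝ (Fin (n + 1) → ℝ)}
    (hv : Pi.single (Fin.last n) 1 ∈ P) :
    Module.finrank ℝ (P.map (dropLast n)) + 1 = Module.finrank ℝ P := by
  have h := Submodule.finrank_map_add_finrank_inf_ker (dropLast n) P
  rwa [ker_dropLast, inf_eq_right.2 ((Submodule.span_singleton_le_iff_mem _ _).2 hv),
    finrank_span_singleton (by simp)] at h

theorem finrank_map_dropLast_of_notMem {P : Submodule ℝ (Fin (n + 1) → ℝ)}
    (hv : Pi.single (Fin.last n) 1 ∉ P) :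
    Module.finrank ℝ (P.map (dropLast n)) = Module.finrank ℝ P := by
  have h := Submodule.finrank_map_add_finrank_inf_ker (dropLast n) P
  rwa [ker_dropLast, disjoint_iff.1 ((Submodule.disjoint_span_singleton' (by simp)).2 hv),
    finrank_bot, add_zero] at h

theorem snoc_mem_intLat {z : Fin n → ℝ} (hz : z ∈ intLat n) (m : ℤ) :
    (Fin.snoc z (m : ℝ) : Fin (n + 1) → ℝ) ∈ intLat (n + 1) := by
  intro j
  refine Fin.lastCases ⟨m, by simp⟩ (fun j => ?_) j
  simpa using hz j

end DropLast

section Lifting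

variable {n : ℕ} {μ ν : ℝ} {x : Fin n → ℝ}

theorem snoc_mem_smul_stdTerminal_of_le (hν : 0 ≤ ν) (hνμ : ν ≤ μ) (hμ : 0 < μ)
    (hx : x ∈ ν • stdTerminal n) :
    Fin.snoc x ((∑ j, x j - ν) / (n + 1)) ∈ μ • stdTerminal (n + 1) := by
  obtain ⟨hsum, hfacet⟩ := sum_le_and_sum_le_of_mem_smul_stdTerminal hν hx
  set h := (∑ j, x j - ν) / (n + 1)
  have hh : ((n : ℝ) + 1) * h = ∑ j, x j - ν := by simp only [h]; field_simp
  rw [mem_smul_stdTerminal_iff hμ, Fin.sum_univ_castSucc]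
  simp only [Fin.snoc_castSucc, Fin.snoc_last, Fin.forall_fin_succ', Nat.cast_add, Nat.cast_one]
  refine ⟨by nlinarith, fun j => ?_, by linarith⟩
  nlinarith [hfacet j]

theorem snoc_mem_smul_stdTerminal_of_add_le (hν : 0 ≤ ν)
    (hνμ : ν + (n + 1) / (n + 2) ≤ μ) (hx : x ∈ ν • stdTerminal n) {h : ℝ}
    (hlow : (∑ j, x j - μ) / (n + 1) ≤ h) (hup : h ≤ (∑ j, x j - μ) / (n + 1) + 1) :
    Fin.snoc x h ∈ μ • stdTerminal (n + 1) := by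
  obtain ⟨hsum, hfacet⟩ := sum_le_and_sum_le_of_mem_smul_stdTerminal hν hx
  have hn : (0 : ℝ) < n + 1 := by positivity
  have hνμ' : ((n : ℝ) + 2) * ν + (n + 1) ≤ (n + 2) * μ := by
    have := mul_le_mul_of_nonneg_left hνμ (by positivity : (0 : ℝ) ≤ n + 2)
    rwa [mul_add, mul_div_cancel₀ _ (by positivity)] at this
  rw [div_le_iff₀ hn] at hlow
  rw [← sub_le_iff_le_add, le_div_iff₀ hn] at hup
  rw [mem_smul_stdTerminal_iff (by linarith [show (0 : ℝ) < (n + 1) / (n + 2) by positivity]),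
    Fin.sum_univ_castSucc]
  simp only [Fin.snoc_castSucc, Fin.snoc_last, Fin.forall_fin_succ', Nat.cast_add, Nat.cast_one]
  refine ⟨by nlinarith, fun j => ?_, by linarith⟩
  nlinarith [hfacet j]

end Lifting

section Recursion

variable {n i : ℕ} {μ ν : ℝ} {U : AffineSubspace ℝ (Fin (n + 1) → ℝ)}

theorem AffineSubspace.direction_map_dropLast :
    (U.map (dropLast n).toAffineMap).direction = U.direction.map (dropLast n) := by
  rw [AffineSubspace.map_direction, LinearMap.toAffineMap_linear]

theorem smul_stdTerminal_add_intLat_inter_nonempty_of_mem_direction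
    (hν : MeetsFlats (i + 1) (stdTerminal n) (intLat n) ν) (hνμ : ν ≤ μ) (hμ : 0 < μ)
    (hU : (U : Set (Fin (n + 1) → ℝ)).Nonempty)
    (hdim : Module.finrank ℝ U.direction = n + 1 - (i + 1))
    (hv : Pi.single (Fin.last n) 1 ∈ U.direction) :
    ((μ • stdTerminal (n + 1) + intLat (n + 1)) ∩ U).Nonempty := by
  have hdim' : Module.finrank ℝ (U.map (dropLast n).toAffineMap).direction = n - (i + 1) := by
    have := finrank_map_dropLast_of_mem hv
    rw [AffineSubspace.direction_map_dropLast]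
    omega
  obtain ⟨_, ⟨x, hx, z, hz, hxz⟩, u, huU, rfl⟩ :=
    hν.2 _ (hU.image _) (by rwa [Module.finrank_fin_fun])
  set t := (∑ j, x j - ν) / (n + 1)
  refine ⟨Fin.snoc (Fin.init u) t, ⟨Fin.snoc x t, ?_, Fin.snoc z ((0 : ℤ) : ℝ),
    snoc_mem_intLat hz 0, ?_⟩, ?_⟩
  · exact snoc_mem_smul_stdTerminal_of_le hν.1 hνμ hμ hx
  · simpa [Fin.snoc_add_snoc] using hxz
  · rw [SetLike.mem_coe, Fin.snoc_init_eq_smul_single_add]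
    exact AffineSubspace.vadd_mem_of_mem_direction (Submodule.smul_mem _ _ hv) huU

theorem smul_stdTerminal_add_intLat_inter_nonempty_of_notMem_direction
    (hν : MeetsFlats i (stdTerminal n) (intLat n) ν) (hνμ : ν + (n + 1) / (n + 2) ≤ μ)
    (hU : (U : Set (Fin (n + 1) → ℝ)).Nonempty)
    (hdim : Module.finrank ℝ U.direction = n + 1 - (i + 1))
    (hv : Pi.single (Fin.last n) 1 ∉ U.direction) :
    ((μ • stdTerminal (n + 1) + intLat (n + 1)) ∩ U).Nonempty := by
  have hdim' : Module.finrank ℝ (U.map (dropLast n).toAffineMap).direction = n - i := by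
    rw [AffineSubspace.direction_map_dropLast, finrank_map_dropLast_of_notMem hv]
    omega
  obtain ⟨_, ⟨x, hx, z, hz, hxz⟩, u, huU, hu⟩ :=
    hν.2 _ (hU.image _) (by rwa [Module.finrank_fin_fun])
  -- any last coordinate in `[b, b + 1]` lifts `x`, so an integer shift of `u` works
  set b := (∑ j, x j - μ) / (n + 1)
  set m := ⌊u (Fin.last n) - b⌋
  refine ⟨u, ⟨Fin.snoc x (u (Fin.last n) - m), ?_, Fin.snoc z (m : ℝ), snoc_mem_intLat hz m, ?_⟩,
    huU⟩
  · refine snoc_mem_smul_stdTerminal_of_add_le hν.1 hνμ hx ?_ ?_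
    · linarith [Int.floor_le (u (Fin.last n) - b)]
    · linarith [Int.lt_floor_add_one (u (Fin.last n) - b)]
  · simp only [Fin.snoc_add_snoc, hxz, sub_add_cancel, ← hu]
    exact Fin.snoc_init_self u

theorem meetsFlats_stdTerminal_succ {ν' : ℝ}
    (hν : MeetsFlats (i + 1) (stdTerminal n) (intLat n) ν) (hνμ : ν ≤ μ)
    (hν' : MeetsFlats i (stdTerminal n) (intLat n) ν') (hν'μ : ν' + (n + 1) / (n + 2) ≤ μ) :
    MeetsFlats (i + 1) (stdTerminal (n + 1)) (intLat (n + 1)) μ := by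
  have hμ : 0 < μ := by linarith [hν'.1, show (0 : ℝ) < (n + 1) / (n + 2) by positivity]
  refine ⟨hμ.le, fun U hU hdim => ?_⟩
  rw [Module.finrank_fin_fun] at hdim
  by_cases hv : Pi.single (Fin.last n) 1 ∈ U.direction
  · exact smul_stdTerminal_add_intLat_inter_nonempty_of_mem_direction hν hνμ hμ hU hdim hv
  · exact smul_stdTerminal_add_intLat_inter_nonempty_of_notMem_direction hν' hν'μ hU hdim hv

end Recursion

theorem covMin_stdTerminal_recursive_bound_general (d i : ℕ) (hd : 2 ≤ d) (hi : 1 ≤ i) :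
    covMin i (stdTerminal d) (intLat d) ≤
      max (covMin i (stdTerminal (d - 1)) (intLat (d - 1)))
        (covMin (i - 1) (stdTerminal (d - 1)) (intLat (d - 1)) + (d : ℝ) / ((d : ℝ) + 1)) := by
  obtain ⟨n, rfl⟩ : ∃ n, d = n + 1 := ⟨d - 1, by omega⟩
  obtain ⟨i, rfl⟩ : ∃ i', i = i' + 1 := ⟨i - 1, by omega⟩
  have hc : ((n + 1 : ℕ) : ℝ) / ((n + 1 : ℕ) + 1) = (n + 1) / (n + 2) := by push_cast; ring
  simp only [Nat.add_sub_cancel, hc]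
  refine covMin_le_of_forall_lt fun μ hμ => ?_
  obtain ⟨hμ₁, hμ₂⟩ := max_lt_iff.1 hμ
  obtain ⟨ν, hν, hνμ⟩ := exists_meetsFlats_lt (exists_meetsFlats_stdTerminal _ _) hμ₁
  obtain ⟨ν', hν', hν'μ⟩ :=
    exists_meetsFlats_lt (exists_meetsFlats_stdTerminal _ _) (lt_sub_iff_add_lt.2 hμ₂)
  exact meetsFlats_stdTerminal_succ hν hνμ.le hν' (by linarith)

/-- **Recursive bound for terminal simplices.** For `d ≥ 2` and `1 ≤ i ≤ d-1`,
`μ_i(T_d) ≤ max { μ_i(T_{d-1}), μ_{i-1}(T_{d-1}) + d/(d+1) }`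
(with the convention `μ_0 = 0`, which holds automatically for `covMin`). -/
theorem covMin_stdTerminal_recursive_bound (d i : ℕ) (hd : 2 ≤ d) (hi : 1 ≤ i)
    (hid : i ≤ d - 1) :
    covMin i (stdTerminal d) (intLat d) ≤
      max (covMin i (stdTerminal (d - 1)) (intLat (d - 1)))
        (covMin (i - 1) (stdTerminal (d - 1)) (intLat (d - 1)) + (d : ℝ) / ((d : ℝ) + 1)) :=
  covMin_stdTerminal_recursive_bound_general d i hd hi
end

section
/- For every d ∈ ℕ and every i ∈ {1,…,d}, the i-th covering minimum of the standard terminal simplex satisfies μ_i(T_d) ≤ (i/2)·(1 + (d−i)/(d+1)). -/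
open scoped Pointwise

lemma gaussIcc (n : ℕ) : ∑ k ∈ Finset.Icc 1 n, (k : ℝ) = n * (n + 1) / 2 := by
  induction n with
  | zero => simp
  | succ m ih =>
      rw [Finset.sum_Icc_succ_top (by omega : 1 ≤ m + 1), ih]
      push_cast
      ring

lemma countLemma {α : Type*} [DecidableEq α] (B : Finset α) (c : α → ℝ)
    (hc : ∀ b ∈ B, 0 < c b)
    (h : ∑ b ∈ B, c b < ∑ k ∈ Finset.Icc 1 B.card, (k : ℝ)) :
    ∃ k : ℕ, 1 ≤ k ∧ k ≤ B.card ∧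
      (k : ℝ) ≤ ((B.filter fun b => c b ≤ (k : ℝ)).card : ℝ) := by
  by_contra hcon
  push_neg at hcon
  set n := B.card with hn
  -- A1 : per-element count bound
  have A1 : ∀ b ∈ B, (((Finset.Icc 1 n).filter fun k : ℕ => (k : ℝ) < c b).card : ℝ) ≤ c b := by
    intro b hb
    set T := (Finset.Icc 1 n).filter fun k : ℕ => (k : ℝ) < c b with hT
    rcases T.eq_empty_or_nonempty with he | hne
    · rw [he]; simpa using (hc b hb).le
    · have hm := T.max'_mem hne
      have hsub : T ⊆ Finset.Icc 1 (T.max' hne) := by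
        intro x hx
        have h1 : 1 ≤ x := (Finset.mem_Icc.mp (Finset.mem_filter.mp hx).1).1
        exact Finset.mem_Icc.mpr ⟨h1, T.le_max' x hx⟩
      have hcard : T.card ≤ T.max' hne := by
        have := Finset.card_le_card hsub
        simpa [Nat.card_Icc] using this
      have hlt : ((T.max' hne : ℕ) : ℝ) < c b := (Finset.mem_filter.mp hm).2
      calc (T.card : ℝ) ≤ ((T.max' hne : ℕ) : ℝ) := by exact_mod_cast hcard
        _ ≤ c b := hlt.le
  -- A2 double counting
  have A2 : ∑ b ∈ B, (((Finset.Icc 1 n).filter fun k : ℕ => (k : ℝ) < c b).card : ℝ)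
      = ∑ k ∈ Finset.Icc 1 n, ((B.filter fun b => (k : ℝ) < c b).card : ℝ) := by
    simp only [Finset.card_filter]
    push_cast
    rw [Finset.sum_comm]
  -- A3 lower bound each k
  have A3 : ∀ k ∈ Finset.Icc 1 n, (n : ℝ) - (k : ℝ) + 1 ≤ ((B.filter fun b => (k : ℝ) < c b).card : ℝ) := by
    intro k hk
    obtain ⟨hk1, hkn⟩ := Finset.mem_Icc.mp hk
    have hle : ((B.filter fun b => c b ≤ (k : ℝ)).card : ℝ) < (k : ℝ) := hcon k hk1 hkn
    have hleN : (B.filter fun b => c b ≤ (k : ℝ)).card + 1 ≤ k := by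
      have : (B.filter fun b => c b ≤ (k : ℝ)).card < k := by exact_mod_cast hle
      omega
    have hleR : ((B.filter fun b => c b ≤ (k : ℝ)).card : ℝ) + 1 ≤ (k : ℝ) := by
      exact_mod_cast hleN
    have hsplit : (B.filter fun b => c b ≤ (k : ℝ)).card
        + (B.filter fun b => ¬ (c b ≤ (k : ℝ))).card = n := by
      rw [hn]; exact Finset.card_filter_add_card_filter_not _
    have hEq : (B.filter fun b => ¬ (c b ≤ (k : ℝ))) = (B.filter fun b => (k : ℝ) < c b) := by
      apply Finset.filter_congr
      intro b _
      simp [not_le]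
    rw [hEq] at hsplit
    have := congrArg (fun m : ℕ => (m : ℝ)) hsplit
    push_cast at this
    linarith
  have hsum3 : ∑ k ∈ Finset.Icc 1 n, ((n : ℝ) - (k : ℝ) + 1)
      ≤ ∑ k ∈ Finset.Icc 1 n, ((B.filter fun b => (k : ℝ) < c b).card : ℝ) :=
    Finset.sum_le_sum A3
  have hgauss := gaussIcc n
  have hcount : ∑ k ∈ Finset.Icc 1 n, ((n : ℝ) - (k : ℝ) + 1) = n * (n+1) / 2 := by
    rw [Finset.sum_add_distrib, Finset.sum_sub_distrib, Finset.sum_const, Finset.sum_const, hgauss]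
    simp [Nat.card_Icc]
    ring
  have hfin : ∑ b ∈ B, c b ≥ n * (n+1) / 2 := by
    calc ∑ b ∈ B, c b ≥ ∑ b ∈ B, (((Finset.Icc 1 n).filter fun k : ℕ => (k : ℝ) < c b).card : ℝ) :=
          Finset.sum_le_sum A1
      _ = ∑ k ∈ Finset.Icc 1 n, ((B.filter fun b => (k : ℝ) < c b).card : ℝ) := A2
      _ ≥ n * (n+1) / 2 := by rw [← hcount]; exact hsum3
  rw [hgauss] at h
  linarith

lemma selectLemma {α : Type*} [DecidableEq α] (D μ : ℝ) (hD : 0 < D)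
    (B : Finset α) (f : α → ℝ)
    (h0 : ∀ b ∈ B, 0 ≤ f b) (h1 : ∀ b ∈ B, f b < 1)
    (hnD : (B.card : ℝ) < D)
    (hμ : D * B.card - D * μ ≤ B.card * (B.card + 1) / 2) :
    ∃ S : Finset α, S ⊆ B ∧ (∑ b ∈ B, f b) - S.card ≤ μ ∧
      ∀ b ∈ B, D * (f b - (if b ∈ S then 1 else 0)) ≥ ((∑ b ∈ B, f b) - S.card) - μ := by
  set F := ∑ b ∈ B, f b with hF
  by_cases hFμ : F ≤ μ
  · refine ⟨∅, Finset.empty_subset _, by simpa using hFμ, ?_⟩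
    intro b hb
    simp only [Finset.notMem_empty, if_false, Finset.card_empty, Nat.cast_zero, sub_zero]
    have : 0 ≤ D * f b := mul_nonneg hD.le (h0 b hb)
    linarith
  · push_neg at hFμ
    set t := F - μ with ht
    have htpos : 0 < t := by simp [ht]; linarith
    set c : α → ℝ := fun b => t + D * (1 - f b) with hc
    have hcpos : ∀ b ∈ B, 0 < c b := by
      intro b hb
      have : 0 < D * (1 - f b) := mul_pos hD (by linarith [h1 b hb])
      simp [hc]; linarith
    have hcsum : ∑ b ∈ B, c b = B.card * t + D * B.card - D * F := by
      simp only [hc]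
      rw [Finset.sum_add_distrib, Finset.sum_const, ← Finset.mul_sum,
        Finset.sum_sub_distrib, Finset.sum_const, ← hF]
      simp only [nsmul_eq_mul, smul_eq_mul, mul_one]
      ring
    have hlt : ∑ b ∈ B, c b < ∑ k ∈ Finset.Icc 1 B.card, (k : ℝ) := by
      rw [gaussIcc, hcsum]
      nlinarith [htpos, hnD]
    obtain ⟨k, hk1, hkn, hkcard⟩ := countLemma B c hcpos hlt
    set S := B.filter fun b => c b ≤ (k : ℝ) with hS
    have hSB : S ⊆ B := Finset.filter_subset _ _
    have hSne : S.Nonempty := by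
      rw [← Finset.card_pos]
      have : (1 : ℝ) ≤ (S.card : ℝ) := le_trans (by exact_mod_cast hk1) hkcard
      exact_mod_cast lt_of_lt_of_le zero_lt_one this
    have htk : t < (k : ℝ) := by
      obtain ⟨b, hb⟩ := hSne
      have hcb : c b ≤ (k : ℝ) := (Finset.mem_filter.mp hb).2
      have : t < c b := by
        have : 0 < D * (1 - f b) := mul_pos hD (by linarith [h1 b (hSB hb)])
        simp [hc]; linarith
      linarith
    have htS : t < (S.card : ℝ) := lt_of_lt_of_le htk hkcard
    refine ⟨S, hSB, by simp [ht] at htS ⊢; linarith, ?_⟩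
    intro b hb
    by_cases hbS : b ∈ S
    · have hcb : c b ≤ (k : ℝ) := (Finset.mem_filter.mp hbS).2
      have : D * (f b - 1) = t - c b := by simp [hc]; ring
      rw [if_pos hbS, this]
      have : (k : ℝ) ≤ (S.card : ℝ) := hkcard
      linarith
    · rw [if_neg hbS]
      have : 0 ≤ D * f b := mul_nonneg hD.le (h0 b hb)
      simp only [sub_zero]
      linarith

lemma mem_stdTerminal (d : ℕ) (u : Fin d → ℝ)
    (hsum : ∑ j, u j ≤ 1)
    (hco : ∀ j, (∑ j', u j') - 1 ≤ ((d : ℝ) + 1) * u j) :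
    u ∈ stdTerminal d := by
  classical
  set lam0 : ℝ := (1 - ∑ j, u j) / ((d : ℝ) + 1) with hlam0
  have hd1 : (0 : ℝ) < (d : ℝ) + 1 := by positivity
  have hlam0n : 0 ≤ lam0 := by
    apply div_nonneg _ hd1.le
    linarith
  set w : Option (Fin d) → ℝ := fun o => o.elim lam0 (fun j => u j + lam0) with hw
  set z : Option (Fin d) → (Fin d → ℝ) :=
    fun o => o.elim (fun _ => (-1 : ℝ)) (fun j => Pi.single j (1 : ℝ)) with hz
  have hwn : ∀ o ∈ (Finset.univ : Finset (Option (Fin d))), 0 ≤ w o := by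
    rintro (_ | j) -
    · exact hlam0n
    · have h2 := hco j
      have h3 : u j + (1 - ∑ j', u j') / ((d : ℝ) + 1)
          = (((d : ℝ) + 1) * u j + (1 - ∑ j', u j')) / ((d : ℝ) + 1) := by
        field_simp
      have h4 : 0 ≤ u j + (1 - ∑ j', u j') / ((d : ℝ) + 1) := by
        rw [h3]
        apply div_nonneg _ hd1.le
        linarith
      simpa [hw, hlam0] using h4
  have hwsum : ∑ o : Option (Fin d), w o = 1 := by
    rw [Fintype.sum_option]
    simp only [hw, Option.elim]
    rw [Finset.sum_add_distrib, Finset.sum_const]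
    simp only [Finset.card_univ, Fintype.card_fin, nsmul_eq_mul]
    rw [hlam0]
    field_simp
    ring
  have hzmem : ∀ o ∈ (Finset.univ : Finset (Option (Fin d))),
      z o ∈ (insert (fun _ => (-1 : ℝ)) (Set.range fun j : Fin d => Pi.single j (1 : ℝ))) := by
    rintro (_ | j) -
    · exact Set.mem_insert _ _
    · exact Set.mem_insert_of_mem _ ⟨j, rfl⟩
  have hcm := Finset.centerMass_mem_convexHull (Finset.univ : Finset (Option (Fin d)))
      hwn (by rw [hwsum]; norm_num) hzmem
  have hcmeq : (Finset.univ : Finset (Option (Fin d))).centerMass w z = u := by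
    rw [Finset.centerMass, hwsum]
    simp only [inv_one, one_smul]
    funext p
    have happ : (∑ o : Option (Fin d), w o • z o) p = ∑ o : Option (Fin d), w o * z o p := by
      rw [Finset.sum_apply]
      rfl
    rw [happ, Fintype.sum_option]
    simp only [hw, hz, Option.elim]
    have hsing : ∀ j : Fin d, (Pi.single j (1:ℝ) : Fin d → ℝ) p = if p = j then 1 else 0 := by
      intro j
      rcases eq_or_ne p j with h | h
      · rw [if_pos h, h, Pi.single_eq_same]
      · rw [if_neg h, Pi.single_eq_of_ne h]
    rw [Finset.sum_congr rfl (fun j _ => by rw [hsing j])]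
    simp only [mul_ite, mul_one, mul_zero]
    rw [Finset.sum_ite_eq Finset.univ p (fun j => u j + lam0)]
    simp
  rw [← hcmeq]
  exact hcm

lemma span_singles_top (d : ℕ) :
    Submodule.span ℝ (Set.range fun j : Fin d => Pi.single j (1:ℝ)) = ⊤ := by
  have := (Pi.basisFun ℝ (Fin d)).span_eq
  have heq : (Set.range fun j : Fin d => Pi.single j (1:ℝ))
      = Set.range (Pi.basisFun ℝ (Fin d)) := by
    ext x
    simp [Pi.basisFun_apply, eq_comm]
  rw [heq, this]

lemma exists_coord_complement (d : ℕ) :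
    ∀ n : ℕ, ∀ V : Submodule ℝ (Fin d → ℝ), d ≤ Module.finrank ℝ V + n →
    ∃ B : Finset (Fin d), B.card ≤ n ∧
      V ⊔ Submodule.span ℝ ((fun j => Pi.single j (1:ℝ)) '' (B : Set (Fin d))) = ⊤ := by
  intro n
  induction n with
  | zero =>
      intro V hV
      refine ⟨∅, le_refl _, ?_⟩
      have hVtop : V = ⊤ := by
        apply Submodule.eq_top_of_finrank_eq
        have h1 : Module.finrank ℝ V ≤ Module.finrank ℝ (Fin d → ℝ) := V.finrank_le
        have h2 : Module.finrank ℝ (Fin d → ℝ) = d := by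
          simp [Module.finrank_pi]
        omega
      simp [hVtop]
  | succ n ih =>
      intro V hV
      by_cases hVtop : V = ⊤
      · exact ⟨∅, Nat.zero_le _, by simp [hVtop]⟩
      · have hex : ∃ j : Fin d, Pi.single j (1:ℝ) ∉ V := by
          by_contra hall
          push_neg at hall
          apply hVtop
          rw [← top_le_iff, ← span_singles_top d]
          rw [Submodule.span_le]
          rintro _ ⟨j, rfl⟩
          exact hall j
        obtain ⟨j, hj⟩ := hex
        set V' := V ⊔ Submodule.span ℝ {Pi.single j (1:ℝ)} with hV'
        have hlt : V < V' := by
          rw [hV']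
          apply lt_of_le_of_ne le_sup_left
          intro he
          apply hj
          rw [he]
          exact Submodule.mem_sup_right (Submodule.mem_span_singleton_self _)
        have hrank : Module.finrank ℝ V < Module.finrank ℝ V' :=
          Submodule.finrank_lt_finrank_of_lt hlt
        obtain ⟨B', hB'c, hB's⟩ := ih V' (by omega)
        refine ⟨insert j B', ?_, ?_⟩
        · calc (insert j B').card ≤ B'.card + 1 := Finset.card_insert_le _ _
            _ ≤ n + 1 := by omega
        · rw [Finset.coe_insert, Set.image_insert_eq, Submodule.span_insert]
          rw [← hB's, hV']
          rw [sup_assoc]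

lemma exists_point_int_outside (d : ℕ) (U : AffineSubspace ℝ (Fin d → ℝ))
    (hU : (U : Set (Fin d → ℝ)).Nonempty) (B : Finset (Fin d))
    (hsup : U.direction ⊔ Submodule.span ℝ
      ((fun j => Pi.single j (1:ℝ)) '' (B : Set (Fin d))) = ⊤) :
    ∃ x ∈ (U : Set (Fin d → ℝ)), ∀ j ∉ B, x j = 0 := by
  classical
  set π : (Fin d → ℝ) →ₗ[ℝ] (Fin d → ℝ) :=
    LinearMap.pi (fun j => if j ∈ B then 0 else LinearMap.proj j) with hπdef
  have hπ : ∀ (y : Fin d → ℝ) (j : Fin d), π y j = if j ∈ B then 0 else y j := by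
    intro y j
    rw [hπdef, LinearMap.pi_apply]
    split_ifs with h
    · simp
    · simp [LinearMap.proj_apply]
  have hker : Submodule.span ℝ ((fun j => Pi.single j (1:ℝ)) '' (B : Set (Fin d)))
      ≤ LinearMap.ker π := by
    rw [Submodule.span_le]
    rintro _ ⟨b, hb, rfl⟩
    rw [SetLike.mem_coe, LinearMap.mem_ker]
    funext j
    rw [hπ]
    split_ifs with h
    · rfl
    · have hne : j ≠ b := fun he => h (he ▸ hb)
      exact Pi.single_eq_of_ne hne 1
  obtain ⟨u₀, hu₀⟩ := hU
  have hmem : π (-u₀) ∈ Submodule.map π ⊤ := ⟨-u₀, trivial, rfl⟩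
  rw [← hsup, Submodule.map_sup] at hmem
  have hbot : Submodule.map π (Submodule.span ℝ
      ((fun j => Pi.single j (1:ℝ)) '' (B : Set (Fin d)))) = ⊥ := by
    rw [eq_bot_iff]
    rintro _ ⟨s, hs, rfl⟩
    simpa using (LinearMap.mem_ker.mp (hker hs))
  rw [hbot, sup_bot_eq] at hmem
  obtain ⟨v, hv, hπv⟩ := hmem
  refine ⟨v + u₀, ?_, ?_⟩
  · exact AffineSubspace.vadd_mem_of_mem_direction hv hu₀
  · intro j hj
    have hx : π (v + u₀) = 0 := by
      rw [map_add, hπv, map_neg]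
      abel
    have := hπ (v + u₀) j
    rw [hx, if_neg hj] at this
    simpa using this.symm

/-- **Corollary (intersection bound for terminal simplices).** For `1 ≤ i ≤ d`,
`μ_i(T_d) ≤ (i/2)(1 + (d-i)/(d+1))`. -/
theorem covMin_stdTerminal_le_intersection_bound (d i : ℕ) (hi : 1 ≤ i) (hid : i ≤ d) :
    covMin i (stdTerminal d) (intLat d) ≤
      ((i : ℝ) / 2) * (1 + ((d : ℝ) - (i : ℝ)) / ((d : ℝ) + 1)) := by
  classical
  set μ : ℝ := ((i : ℝ) / 2) * (1 + ((d : ℝ) - (i : ℝ)) / ((d : ℝ) + 1)) with hμdef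
  have hd1 : (0:ℝ) < (d:ℝ) + 1 := by positivity
  have hiR : (1:ℝ) ≤ (i:ℝ) := by exact_mod_cast hi
  have hidR : (i:ℝ) ≤ (d:ℝ) := by exact_mod_cast hid
  have hμ2 : μ * (2 * ((d:ℝ) + 1)) = (i:ℝ) * (2 * (d:ℝ) + 1 - (i:ℝ)) := by
    rw [hμdef]
    rw [show ((i:ℝ) / 2 * (1 + ((d:ℝ) - (i:ℝ)) / ((d:ℝ) + 1))) * (2 * ((d:ℝ) + 1))
        = (i:ℝ) * (((d:ℝ) + 1) + ((d:ℝ) - (i:ℝ)) / ((d:ℝ) + 1) * ((d:ℝ) + 1)) from by ring]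
    rw [div_mul_cancel₀ _ hd1.ne']
    ring
  have hμpos : 0 < μ := by
    have h1 : (0:ℝ) < (i:ℝ) * (2 * (d:ℝ) + 1 - (i:ℝ)) := by nlinarith
    nlinarith
  unfold covMin
  apply csInf_le
  · exact ⟨0, fun x hx => hx.1⟩
  refine ⟨hμpos.le, ?_⟩
  intro U hUne hdim
  have hfr : Module.finrank ℝ (Fin d → ℝ) = d := by simp [Module.finrank_pi]
  have hdir : d ≤ Module.finrank ℝ U.direction + i := by
    rw [hdim, hfr]
    omega
  obtain ⟨B, hBcard, hBsup⟩ := exists_coord_complement d i U.direction hdir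
  obtain ⟨x, hxU, hxout⟩ := exists_point_int_outside d U hUne B hBsup
  set f : Fin d → ℝ := fun j => x j - (⌊x j⌋ : ℝ) with hf
  have h0 : ∀ b ∈ B, 0 ≤ f b := fun b _ => by
    rw [hf]; simp [sub_nonneg, Int.floor_le]
  have h1 : ∀ b ∈ B, f b < 1 := fun b _ => by
    rw [hf]; simp only [sub_lt_iff_lt_add]
    have := Int.lt_floor_add_one (x b)
    linarith
  have hnR : ((B.card : ℕ) : ℝ) ≤ (i:ℝ) := by exact_mod_cast hBcard
  have hnD : ((B.card : ℕ) : ℝ) < (d:ℝ) + 1 := by linarith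
  have hμsel : ((d:ℝ)+1) * B.card - ((d:ℝ)+1) * μ ≤ B.card * (B.card + 1) / 2 := by
    nlinarith [mul_nonneg (sub_nonneg.mpr hnR)
      (show (0:ℝ) ≤ 2*(d:ℝ) + 1 - (i:ℝ) - B.card by linarith)]
  obtain ⟨S, hSB, hWμ, hSb⟩ := selectLemma ((d:ℝ)+1) μ hd1 B f h0 h1 hnD hμsel
  set zI : Fin d → ℤ := fun j => if j ∈ B then ⌊x j⌋ + (if j ∈ S then 1 else 0) else 0 with hzI
  set z : Fin d → ℝ := fun j => ((zI j : ℤ) : ℝ) with hz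
  have hzL : z ∈ intLat d := fun j => ⟨zI j, rfl⟩
  set w : Fin d → ℝ := x - z with hw
  have hwB : ∀ j ∈ B, w j = f j - (if j ∈ S then 1 else 0) := by
    intro j hj
    rw [hw, hz, hzI, hf]
    simp only [Pi.sub_apply, if_pos hj]
    push_cast
    split_ifs <;> ring
  have hwO : ∀ j ∉ B, w j = 0 := by
    intro j hj
    rw [hw, hz, hzI]
    simp only [Pi.sub_apply, if_neg hj]
    rw [hxout j hj]
    simp
  set W : ℝ := (∑ b ∈ B, f b) - S.card with hW
  have hsumw : ∑ j, w j = W := by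
    rw [hW]
    rw [← Finset.sum_subset (Finset.subset_univ B) (fun j _ hj => hwO j hj)]
    rw [Finset.sum_congr rfl hwB]
    rw [Finset.sum_sub_distrib]
    congr 1
    have hfil : ∑ b ∈ B, (if b ∈ S then (1:ℝ) else 0) = ∑ b ∈ B.filter (· ∈ S), (1:ℝ) :=
      (Finset.sum_filter _ _).symm
    have hBS : B.filter (· ∈ S) = S := by
      rw [Finset.filter_mem_eq_inter, Finset.inter_eq_right.mpr hSB]
    rw [hfil, hBS, Finset.sum_const]
    simp
  have hx_eq : w + z = x := by rw [hw]; abel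
  have hKw : w ∈ μ • stdTerminal d := by
    have hinv : (0:ℝ) ≤ μ⁻¹ := inv_nonneg.mpr hμpos.le
    have h3 : μ⁻¹ * μ = 1 := inv_mul_cancel₀ hμpos.ne'
    have hu : μ⁻¹ • w ∈ stdTerminal d := by
      apply mem_stdTerminal
      · simp only [Pi.smul_apply, smul_eq_mul]
        rw [← Finset.mul_sum, hsumw]
        calc μ⁻¹ * W ≤ μ⁻¹ * μ := mul_le_mul_of_nonneg_left hWμ hinv
          _ = 1 := h3
      · intro j
        have hkey : W - μ ≤ ((d:ℝ)+1) * w j := by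
          by_cases hjB : j ∈ B
          · have := hSb j hjB
            rw [← hwB j hjB] at this
            exact this
          · rw [hwO j hjB, mul_zero]
            linarith
        have h2 := mul_le_mul_of_nonneg_left hkey hinv
        simp only [Pi.smul_apply, smul_eq_mul]
        rw [← Finset.mul_sum, hsumw]
        nlinarith [h2, h3]
    exact ⟨μ⁻¹ • w, hu, smul_inv_smul₀ hμpos.ne' w⟩
  refine ⟨x, ⟨?_, hxU⟩⟩
  rw [← hx_eq]
  exact Set.add_mem_add hKw hzL
end

section
/- For every d ∈ ℕ and every i ∈ {1,…,d}, the i-th covering minimum of the standard terminal simplex satisfies μ_i(T_d) ≥ i/2. -/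
open scoped Pointwise

-- sum of a finset of n naturals is at least 0+1+...+(n-1)
lemma sum_ge_of_card (n : ℕ) : ∀ s : Finset ℕ, s.card = n →
    ∑ k ∈ Finset.range n, k ≤ ∑ x ∈ s, x := by
  induction n with
  | zero => intro s _; simp
  | succ n ih =>
    intro s hcard
    have hne : s.Nonempty := Finset.card_pos.mp (by omega)
    have hmax := s.max'_mem hne
    have hsub : s ⊆ Finset.range (s.max' hne + 1) := by
      intro x hx
      simp only [Finset.mem_range]
      exact Nat.lt_succ_of_le (s.le_max' x hx)
    have hle : n ≤ s.max' hne := by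
      have := Finset.card_le_card hsub
      rw [Finset.card_range] at this
      omega
    have herase : (s.erase (s.max' hne)).card = n := by
      rw [Finset.card_erase_of_mem hmax, hcard]
      omega
    have h2 := ih _ herase
    rw [Finset.sum_range_succ, ← Finset.sum_erase_add s _ hmax]
    omega

lemma sum_distinct_nonneg (n : ℕ) (u : Fin n → ℤ) (hinj : Function.Injective u)
    (h0 : ∀ j, 0 ≤ u j) : ∑ j : Fin n, ((j : ℕ) : ℤ) ≤ ∑ j, u j := by
  have hinj2 : Function.Injective (fun j => (u j).toNat) := by
    intro a b hab
    apply hinj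
    have := congrArg (fun x : ℕ => (x : ℤ)) hab
    simpa [Int.toNat_of_nonneg (h0 a), Int.toNat_of_nonneg (h0 b)] using this
  have hcard : (Finset.image (fun j => (u j).toNat) Finset.univ).card = n := by
    rw [Finset.card_image_of_injective _ hinj2, Finset.card_univ, Fintype.card_fin]
  have h1 := sum_ge_of_card n _ hcard
  rw [Finset.sum_image (fun a _ b _ h => hinj2 h)] at h1
  have h2 : ∑ j : Fin n, ((j:ℕ):ℤ) = ((∑ k ∈ Finset.range n, k : ℕ) : ℤ) := by
    push_cast
    rw [Fin.sum_univ_eq_sum_range]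
  have h3 : ∑ j : Fin n, u j = ((∑ j : Fin n, (u j).toNat : ℕ) : ℤ) := by
    push_cast
    exact Finset.sum_congr rfl fun j _ => (Int.toNat_of_nonneg (h0 j)).symm
  rw [h2, h3]
  exact_mod_cast h1



-- membership helper
lemma mem_stdTerminal_of (d : ℕ) (a : ℝ) (w : Fin d → ℝ) (ha : 0 ≤ a)
    (hw : ∀ k, 0 ≤ w k) (hsum : a + ∑ k, w k = 1) :
    (fun m => w m - a) ∈ stdTerminal d := by
  classical
  set S := insert (fun _ => (-1 : ℝ)) (Set.range fun j : Fin d => Pi.single j (1 : ℝ)) with hS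
  have hconv : Convex ℝ (convexHull ℝ S) := convex_convexHull ℝ S
  have key : ∑ o : Option (Fin d),
      (Option.elim o a w) • (Option.elim o (fun _ => (-1:ℝ)) (fun j => Pi.single j (1:ℝ)))
      ∈ convexHull ℝ S := by
    apply hconv.sum_mem
    · intro o _
      cases o with
      | none => exact ha
      | some k => exact hw k
    · rw [Fintype.sum_option]
      exact hsum
    · intro o _
      apply subset_convexHull
      cases o with
      | none => exact Set.mem_insert _ _
      | some k => exact Set.mem_insert_of_mem _ ⟨k, rfl⟩
  have heq : (∑ o : Option (Fin d),
      (Option.elim o a w) • (Option.elim o (fun _ => (-1:ℝ)) (fun j => Pi.single j (1:ℝ))))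
      = fun m => w m - a := by
    rw [Fintype.sum_option]
    funext m
    simp only [Option.elim, Pi.add_apply, Pi.smul_apply, Finset.sum_apply, smul_eq_mul]
    rw [Finset.sum_congr rfl (fun k _ => by rw [Pi.single_apply])]
    simp [Finset.sum_ite_eq, mul_comm]
    ring
  rw [heq] at key
  exact key

-- valid inequality helper
lemma le_of_mem_stdTerminal (d i : ℕ) (hid : i ≤ d) (c : Fin i → ℝ) (b : ℝ) (hb : 0 ≤ b)
    (hneg : -∑ j, c j ≤ b) (hc : ∀ j, c j ≤ b) {t : Fin d → ℝ} (ht : t ∈ stdTerminal d) :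
    ∑ j : Fin i, c j * t (Fin.castLE hid j) ≤ b := by
  classical
  have hlin : IsLinearMap ℝ (fun x : Fin d → ℝ => ∑ j : Fin i, c j * x (Fin.castLE hid j)) := by
    constructor
    · intro x y
      rw [← Finset.sum_add_distrib]
      exact Finset.sum_congr rfl fun j _ => by simp [mul_add]
    · intro r x
      rw [Finset.smul_sum]
      exact Finset.sum_congr rfl fun j _ => by simp [smul_eq_mul]; ring
  have hsub : stdTerminal d ⊆ {x | ∑ j : Fin i, c j * x (Fin.castLE hid j) ≤ b} := by
    apply convexHull_min _ (convex_halfSpace_le hlin b)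
    rintro g (rfl | ⟨k, rfl⟩)
    · simp only [Set.mem_setOf_eq]
      calc ∑ j : Fin i, c j * (-1:ℝ) = -∑ j, c j := by
            rw [← Finset.sum_neg_distrib]; exact Finset.sum_congr rfl fun j _ => by ring
        _ ≤ b := hneg
    · simp only [Set.mem_setOf_eq]
      by_cases hk : (k : ℕ) < i
      · have hrw : ∀ j : Fin i, c j * (Pi.single k 1 : Fin d → ℝ) (Fin.castLE hid j)
            = if j = ⟨(k:ℕ), hk⟩ then c j else 0 := by
          intro j
          rw [Pi.single_apply]
          by_cases hj : j = ⟨(k:ℕ), hk⟩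
          · subst hj
            simp [Fin.castLE, Fin.ext_iff]
          · have : Fin.castLE hid j ≠ k := by
              intro hcontra
              apply hj
              apply Fin.ext
              simpa [Fin.castLE] using congrArg Fin.val hcontra
            simp [this, hj]
        rw [Finset.sum_congr rfl (fun j _ => hrw j), Finset.sum_ite_eq' Finset.univ _ c]
        simpa using hc _
      · have hrw : ∀ j : Fin i, c j * (Pi.single k 1 : Fin d → ℝ) (Fin.castLE hid j) = 0 := by
          intro j
          have : Fin.castLE hid j ≠ k := by
            intro hcontra
            apply hk
            rw [← congrArg Fin.val hcontra]
            exact j.isLt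
          rw [Pi.single_apply, if_neg this, mul_zero]
        rw [Finset.sum_congr rfl (fun j _ => hrw j), Finset.sum_const_zero]
        exact hb
  exact hsub ht

set_option maxHeartbeats 1000000 in
/-- **Lower bound for terminal simplices.** For `1 ≤ i ≤ d`, `μ_i(T_d) ≥ i/2`. -/
theorem covMin_stdTerminal_ge (d i : ℕ) (hi : 1 ≤ i) (hid : i ≤ d) :
    (i : ℝ) / 2 ≤ covMin i (stdTerminal d) (intLat d) := by
  classical
  have hd : 1 ≤ d := le_trans hi hid
  have hdR : (0:ℝ) < (d:ℝ) := by exact_mod_cast hd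
  unfold covMin
  apply le_csInf
  · -- nonempty: μ = d works
    refine ⟨(d:ℝ), le_of_lt hdR, ?_⟩
    intro U hUne _
    obtain ⟨x, hxU⟩ := hUne
    refine ⟨x, ?_, hxU⟩
    rw [Set.mem_add]
    set y : Fin d → ℝ := fun k => Int.fract (x k) with hy
    set z : Fin d → ℝ := fun k => ((⌊x k⌋ : ℤ) : ℝ) with hzdef
    set v : Fin d → ℝ := (d:ℝ)⁻¹ • y with hv
    have hv0 : ∀ k, 0 ≤ v k := fun k => by
      simp only [hv, Pi.smul_apply, smul_eq_mul]
      exact mul_nonneg (by positivity) (Int.fract_nonneg _)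
    have hvsum : ∑ k, v k ≤ 1 := by
      have h1 : ∑ k, y k < (d:ℝ) := by
        have : ∑ k : Fin d, y k < ∑ k : Fin d, (1:ℝ) := by
          apply Finset.sum_lt_sum_of_nonempty
          · exact Finset.univ_nonempty_iff.mpr (Fin.pos_iff_nonempty.mp hd)
          · intro k _; exact Int.fract_lt_one _
        simpa using this
      have h2 : ∑ k, v k = (d:ℝ)⁻¹ * ∑ k, y k := by
        simp only [hv, Pi.smul_apply, smul_eq_mul, Finset.mul_sum]
      rw [h2]
      rw [inv_mul_le_iff₀ hdR, mul_one]
      exact le_of_lt h1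
    set a0 : ℝ := (1 - ∑ k, v k)/((d:ℝ)+1) with ha0def
    have ha0 : 0 ≤ a0 := by
      apply div_nonneg (by linarith) (by positivity)
    have hsum0 : a0 + ∑ k, (v k + a0) = 1 := by
      rw [Finset.sum_add_distrib, Finset.sum_const, Finset.card_univ, Fintype.card_fin,
        nsmul_eq_mul]
      have : ((d:ℝ)+1) * a0 = 1 - ∑ k, v k := by
        rw [ha0def]; field_simp
      linarith
    have hvmem : v ∈ stdTerminal d := by
      have := mem_stdTerminal_of d a0 (fun k => v k + a0) ha0
        (fun k => by simpa using add_nonneg (hv0 k) ha0) hsum0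
      convert this using 1
      funext m; ring
    refine ⟨y, ?_, z, ?_, ?_⟩
    · have hmem := Set.smul_mem_smul_set (a := (d:ℝ)) hvmem
      have : (d:ℝ) • v = y := by
        rw [hv, smul_inv_smul₀ (ne_of_gt hdR)]
      rwa [this] at hmem
    · intro j; exact ⟨⌊x j⌋, rfl⟩
    · funext k
      simp only [Pi.add_apply, hy, hzdef]
      exact Int.fract_add_floor (x k)
  · -- lower bound
    rintro μ ⟨hμ0, hcov⟩
    by_contra hlt
    push_neg at hlt
    set π : (Fin d → ℝ) →ₗ[ℝ] (Fin i → ℝ) := LinearMap.funLeft ℝ ℝ (Fin.castLE hid) with hπ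
    have hsurj : Function.Surjective π :=
      LinearMap.funLeft_surjective_of_injective ℝ ℝ _ (Fin.castLE_injective hid)
    set p : Fin d → ℝ := fun k => if (k:ℕ) < i then ((k:ℕ):ℝ)/((i:ℝ)+1) + 1/((i:ℝ)+1) else 0
      with hpdef
    set U : AffineSubspace ℝ (Fin d → ℝ) := AffineSubspace.mk' p (LinearMap.ker π) with hU
    have hdim : Module.finrank ℝ U.direction = Module.finrank ℝ (Fin d → ℝ) - i := by
      rw [hU, AffineSubspace.direction_mk']
      have hrn := LinearMap.finrank_range_add_finrank_ker π
      have hrange : LinearMap.range π = ⊤ := LinearMap.range_eq_top.mpr hsurj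
      rw [hrange, finrank_top] at hrn
      have h1 : Module.finrank ℝ (Fin i → ℝ) = i := by
        rw [Module.finrank_pi]; exact Fintype.card_fin i
      have h2 : Module.finrank ℝ (Fin d → ℝ) = d := by
        rw [Module.finrank_pi]; exact Fintype.card_fin d
      rw [h1, h2] at hrn
      rw [h2]
      omega
    obtain ⟨x, hx, hxU⟩ := hcov U ⟨p, AffineSubspace.self_mem_mk' _ _⟩ hdim
    rw [Set.mem_add] at hx
    obtain ⟨a, ha, z, hz, hax⟩ := hx
    rw [Set.mem_smul_set] at ha
    obtain ⟨t, ht, rfl⟩ := ha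
    -- coordinates of x on U
    have hxcoord : ∀ j : Fin i, x (Fin.castLE hid j) = (((j:ℕ):ℝ) + 1)/((i:ℝ)+1) := by
      intro j
      have hmem := AffineSubspace.mem_mk'.mp hxU
      rw [vsub_eq_sub, LinearMap.mem_ker] at hmem
      have hcf := congrFun hmem j
      rw [hπ] at hcf
      simp only [LinearMap.funLeft_apply, Function.comp_apply, Pi.sub_apply, Pi.zero_apply] at hcf
      have hp : p (Fin.castLE hid j) = (((j:ℕ):ℝ) + 1)/((i:ℝ)+1) := by
        rw [hpdef]
        simp only [Fin.coe_castLE]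
        rw [if_pos j.isLt]
        ring
      linarith [hcf, hp.symm.le]
    -- integer coordinates
    have hm : ∀ j : Fin i, ∃ mj : ℤ, z (Fin.castLE hid j) = (mj : ℝ) :=
      fun j => hz (Fin.castLE hid j)
    choose m hmspec using hm
    set Z : ℤ := ∑ j, m j with hZ
    set σ : ℝ := ∑ j : Fin i, t (Fin.castLE hid j) with hσ
    have hiR : (0:ℝ) < (i:ℝ) + 1 := by positivity
    -- coordinate equations
    have hE : ∀ j : Fin i, μ * t (Fin.castLE hid j) + (m j : ℝ)
        = (((j:ℕ):ℝ) + 1)/((i:ℝ)+1) := by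
      intro j
      have := congrFun hax (Fin.castLE hid j)
      simp only [Pi.add_apply, Pi.smul_apply, smul_eq_mul] at this
      rw [hmspec j] at this
      rw [this, hxcoord j]
    -- sum of coordinate equations
    have hgauss : (∑ j : Fin i, (((j:ℕ):ℝ) + 1)) = (i:ℝ) * ((i:ℝ)+1)/2 := by
      have hn : (∑ j : Fin i, ((j:ℕ) + 1)) * 2 = i * (i+1) := by
        have h1 : ∑ j : Fin i, ((j:ℕ) + 1) = ∑ k ∈ Finset.range i, (k + 1) :=
          Fin.sum_univ_eq_sum_range (fun k => k + 1) i
        have h2 : ∑ k ∈ Finset.range i, (k+1) = ∑ k ∈ Finset.range (i+1), k := by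
          rw [Finset.sum_range_succ' (fun k => k) i]
          simp
        rw [h1, h2, Finset.sum_range_id_mul_two]
        simp [Nat.mul_comm]
      have := congrArg (fun n : ℕ => (n : ℝ)) hn
      push_cast at this
      linarith
    have hsum_eq : μ * σ + (Z:ℝ) = (i:ℝ)/2 := by
      have h1 : ∑ j : Fin i, (μ * t (Fin.castLE hid j) + (m j : ℝ))
          = ∑ j : Fin i, (((j:ℕ):ℝ) + 1)/((i:ℝ)+1) :=
        Finset.sum_congr rfl fun j _ => hE j
      rw [Finset.sum_add_distrib, ← Finset.mul_sum, ← hσ] at h1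
      have h2 : ∑ j : Fin i, ((m j : ℤ):ℝ) = (Z:ℝ) := by rw [hZ]; push_cast; ring
      rw [h2] at h1
      rw [h1, ← Finset.sum_div, hgauss]
      field_simp
    -- first valid inequality: σ ≤ 1
    have hσ1 : σ ≤ 1 := by
      have := le_of_mem_stdTerminal d i hid (fun _ => 1) 1 zero_le_one
        (by
          have : (∑ _j : Fin i, (1:ℝ)) = (i:ℝ) := by simp
          rw [this]
          have : (0:ℝ) ≤ (i:ℝ) := by positivity
          linarith)
        (fun _ => le_refl 1) ht
      simpa [hσ] using this
    have hZ1 : 1 ≤ Z := by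
      have h1 : μ * σ ≤ μ := by
        calc μ * σ ≤ μ * 1 := mul_le_mul_of_nonneg_left hσ1 hμ0
          _ = μ := mul_one μ
      have h2 : (0:ℝ) < (Z:ℝ) := by linarith [hsum_eq, hlt]
      exact_mod_cast Int.add_one_le_of_lt (by exact_mod_cast h2 : (0:ℤ) < Z)
    -- second family of inequalities
    have hmj : ∀ j : Fin i, ((i:ℤ)+1) * m j ≤ Z + ((j:ℕ):ℤ) := by
      intro j
      set c : Fin i → ℝ := fun j' => if j' = j then -(i:ℝ) else 1 with hc
      have hcs : ∑ j', c j' = -1 := by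
        have h1 : ∀ j', c j' = 1 + (if j' = j then -(i:ℝ) - 1 else 0) := by
          intro j'
          rw [hc]
          by_cases h : j' = j <;> simp [h]
        rw [Finset.sum_congr rfl fun j' _ => h1 j', Finset.sum_add_distrib,
          Finset.sum_ite_eq' Finset.univ j (fun _ => -(i:ℝ) - 1)]
        simp
        ring
      have hineq := le_of_mem_stdTerminal d i hid c 1 zero_le_one
        (by rw [hcs]; norm_num)
        (fun j' => by
          rw [hc]
          by_cases h : j' = j
          · simp only [h, if_pos]
            have : (0:ℝ) ≤ (i:ℝ) := Nat.cast_nonneg i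
            linarith
          · simp [h]) ht
      have hconv : ∑ j' : Fin i, c j' * t (Fin.castLE hid j')
          = σ - ((i:ℝ)+1) * t (Fin.castLE hid j) := by
        have h1 : ∀ j' : Fin i, c j' * t (Fin.castLE hid j')
            = t (Fin.castLE hid j') +
              (if j' = j then (-(i:ℝ) - 1) * t (Fin.castLE hid j') else 0) := by
          intro j'
          rw [hc]
          by_cases h : j' = j <;> simp [h] <;> ring
        rw [Finset.sum_congr rfl fun j' _ => h1 j', Finset.sum_add_distrib,
          Finset.sum_ite_eq' Finset.univ j (fun j' => (-(i:ℝ) - 1) * t (Fin.castLE hid j'))]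
        simp [hσ]
        ring
      rw [hconv] at hineq
      -- multiply by μ and substitute
      have h2 : μ * σ - ((i:ℝ)+1) * (μ * t (Fin.castLE hid j)) ≤ μ := by
        have := mul_le_mul_of_nonneg_left hineq hμ0
        rw [mul_one] at this
        linarith [this]
      have h3 : μ * t (Fin.castLE hid j) = (((j:ℕ):ℝ) + 1)/((i:ℝ)+1) - (m j : ℝ) := by
        linarith [hE j]
      rw [h3] at h2
      have h4 : ((i:ℝ)+1) * ((((j:ℕ):ℝ) + 1)/((i:ℝ)+1) - (m j : ℝ))
          = ((j:ℕ):ℝ) + 1 - ((i:ℝ)+1) * (m j : ℝ) := by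
        field_simp
      rw [h4] at h2
      -- μ*σ = i/2 - Z
      have h5 : ((i:ℝ)+1) * (m j : ℝ) < (Z:ℝ) + ((j:ℕ):ℝ) + 1 := by
        have h6 : μ * σ = (i:ℝ)/2 - (Z:ℝ) := by linarith [hsum_eq]
        rw [h6] at h2
        linarith [hlt]
      have h7 : ((i:ℤ)+1) * m j < Z + ((j:ℕ):ℤ) + 1 := by exact_mod_cast h5
      omega
    -- distinct nonneg integers
    set u : Fin i → ℤ := fun j => Z + ((j:ℕ):ℤ) - ((i:ℤ)+1) * m j with hu
    have hu0 : ∀ j, 0 ≤ u j := by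
      intro j
      have := hmj j
      simp only [hu]
      omega
    have huinj : Function.Injective u := by
      intro a b hab
      rw [hu] at hab
      simp only at hab
      have h : ((a:ℕ):ℤ) - ((b:ℕ):ℤ) = ((i:ℤ)+1) * (m a - m b) := by ring_nf; linarith [hab]
      by_cases hm' : m a = m b
      · rw [hm', sub_self, mul_zero] at h
        have : ((a:ℕ):ℤ) = ((b:ℕ):ℤ) := by omega
        exact Fin.ext (by exact_mod_cast this)
      · exfalso
        have ha' : ((a:ℕ):ℤ) < (i:ℤ) := by exact_mod_cast a.isLt
        have hb' : ((b:ℕ):ℤ) < (i:ℤ) := by exact_mod_cast b.isLt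
        have ha'' : (0:ℤ) ≤ ((a:ℕ):ℤ) := Int.natCast_nonneg _
        have hb'' : (0:ℤ) ≤ ((b:ℕ):ℤ) := Int.natCast_nonneg _
        have habs : |((a:ℕ):ℤ) - ((b:ℕ):ℤ)| < (i:ℤ) + 1 := by
          rw [abs_lt]; constructor <;> omega
        rw [h, abs_mul, abs_of_nonneg (by positivity : (0:ℤ) ≤ (i:ℤ)+1)] at habs
        have h1 : 1 ≤ |m a - m b| := Int.one_le_abs (sub_ne_zero.mpr hm')
        nlinarith [Int.natCast_nonneg i]
    have hsum_u : ∑ j, u j = (∑ j : Fin i, ((j:ℕ):ℤ)) - Z := by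
      rw [hu]
      rw [Finset.sum_sub_distrib, Finset.sum_add_distrib, Finset.sum_const, Finset.card_univ,
        Fintype.card_fin, ← Finset.mul_sum, ← hZ]
      push_cast
      ring
    have hfinal := sum_distinct_nonneg i u huinj hu0
    rw [hsum_u] at hfinal
    omega
end

section
/- For every d ∈ ℕ and every j ∈ {1,…,d}, the j-th successive minimum of the difference body of the standard terminal simplex with respect to ℤ^d satisfies λ_j(T_d − T_d, ℤ^d) = d/(d+1). -/
open scoped Pointwise

/-- The `j`-th successive minimum of a (centrally symmetric) convex body `C ⊆ ℝ^d` with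
respect to `ℤ^d`: the least `l > 0` such that `l • C` contains `j` linearly independent
lattice points. -/
noncomputable def succMin (d j : ℕ) (C : Set (Fin d → ℝ)) : ℝ :=
  sInf {l : ℝ | 0 < l ∧ ∃ v : Fin j → (Fin d → ℝ),
    (∀ t, v t ∈ intLat d) ∧ LinearIndependent ℝ v ∧ ∀ t, v t ∈ l • C}

/-!
The unit vectors give the upper bound: `e_i = (d/(d+1)) • (e_i - (-e_i/d))`, and `-e_i/d` is the
barycentre of the vertices of `T_d` other than `e_i`.

For the lower bound it suffices to treat one nonzero lattice point `z = l • (x - y)` with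
`x, y ∈ T_d`, and by the symmetry of `T_d - T_d` we may assume `z` has a positive coordinate. Put
`S = {k | 0 < z k}` and `p = |S|`. The functional `(d + 1) 𝟙_S - p 𝟙` takes its values at the
vertices of `T_d` in `[-p, d + 1 - p]`, so it is at most `l (d + 1)` at `z`; since `z` is integral
it is at least `p (d + 1 - p) ≥ d` there.
-/

section

variable {d : ℕ}

lemma one_le_of_mem_intLat {z : Fin d → ℝ} (hz : z ∈ intLat d) {k : Fin d}
    (hk : 0 < z k) : 1 ≤ z k := by
  obtain ⟨m, hm⟩ := hz k
  rw [hm] at hk ⊢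
  exact_mod_cast (Int.cast_pos.mp hk : 0 < m)

lemma neg_mem_intLat {z : Fin d → ℝ} (hz : z ∈ intLat d) : -z ∈ intLat d := fun k => by
  obtain ⟨m, hm⟩ := hz k
  exact ⟨-m, by simp [hm]⟩

lemma single_one_mem_intLat (i : Fin d) : Pi.single i (1 : ℝ) ∈ intLat d := fun k => by
  by_cases h : k = i
  · exact ⟨1, by simp [h]⟩
  · exact ⟨0, by simp [h]⟩

lemma succMin_eq_of_forall_le {j : ℕ} {C : Set (Fin d → ℝ)} {μ : ℝ} (hj : 1 ≤ j) (hμ : 0 < μ)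
    (v : Fin j → Fin d → ℝ) (hv : ∀ t, v t ∈ intLat d) (hli : LinearIndependent ℝ v)
    (hvC : ∀ t, v t ∈ μ • C)
    (hmin : ∀ l, 0 < l → ∀ z ∈ intLat d, z ≠ 0 → z ∈ l • C → μ ≤ l) :
    succMin d j C = μ := by
  have hμmem : μ ∈ {l : ℝ | 0 < l ∧ ∃ v : Fin j → (Fin d → ℝ),
      (∀ t, v t ∈ intLat d) ∧ LinearIndependent ℝ v ∧ ∀ t, v t ∈ l • C} :=
    ⟨hμ, v, hv, hli, hvC⟩
  refine le_antisymm (csInf_le ⟨0, fun l hl => hl.1.le⟩ hμmem) (le_csInf ⟨μ, hμmem⟩ ?_)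
  rintro l ⟨hl, w, hw, hwli, hwC⟩
  exact hmin l hl (w ⟨0, hj⟩) (hw _) (hwli.ne_zero _) (hwC _)

lemma dotProduct_mem_Icc_of_mem_stdTerminal {u : Fin d → ℝ} {a b : ℝ}
    (hu : ∀ k, u k ∈ Set.Icc a b) (hsum : -∑ k, u k ∈ Set.Icc a b) {x : Fin d → ℝ}
    (hx : x ∈ stdTerminal d) : u ⬝ᵥ x ∈ Set.Icc a b := by
  refine convexHull_min ?_ ((convex_Icc a b).linear_preimage (dotProductBilin ℝ ℝ u)) hx
  rintro y (rfl | ⟨k, rfl⟩)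
  · simpa [dotProduct] using hsum
  · simpa using hu k

lemma dotProduct_sub_le_of_mem_stdTerminal {u : Fin d → ℝ} {a b : ℝ}
    (hu : ∀ k, u k ∈ Set.Icc a b) (hsum : -∑ k, u k ∈ Set.Icc a b) {x y : Fin d → ℝ}
    (hx : x ∈ stdTerminal d) (hy : y ∈ stdTerminal d) : u ⬝ᵥ (x - y) ≤ b - a := by
  have hux := dotProduct_mem_Icc_of_mem_stdTerminal hu hsum hx
  have huy := dotProduct_mem_Icc_of_mem_stdTerminal hu hsum hy
  rw [dotProduct_sub]
  linarith [hux.2, huy.1]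

def cutFunctional (d : ℕ) (S : Finset (Fin d)) : Fin d → ℝ :=
  fun k => (d + 1) * (if k ∈ S then 1 else 0) - S.card

lemma cutFunctional_dotProduct_sub_le (S : Finset (Fin d)) {x y : Fin d → ℝ}
    (hx : x ∈ stdTerminal d) (hy : y ∈ stdTerminal d) :
    cutFunctional d S ⬝ᵥ (x - y) ≤ d + 1 := by
  have hsum : ∑ k, cutFunctional d S k = S.card := by
    simp only [cutFunctional, mul_ite, mul_one, mul_zero, Finset.sum_sub_distrib, Finset.sum_ite_mem,
      Finset.univ_inter, Finset.sum_const, nsmul_eq_mul, Finset.card_univ, Fintype.card_fin]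
    ring
  have hval : ∀ k, cutFunctional d S k ∈ Set.Icc (-(S.card : ℝ)) (d + 1 - S.card) := by
    intro k
    unfold cutFunctional
    split_ifs <;> constructor <;> linarith
  have := dotProduct_sub_le_of_mem_stdTerminal hval (by rw [hsum]; constructor <;> linarith) hx hy
  linarith

lemma natCast_le_cutFunctional_dotProduct {z : Fin d → ℝ} (hz : z ∈ intLat d)
    (hpos : ∃ k, 0 < z k) :
    (d : ℝ) ≤ cutFunctional d {k | 0 < z k} ⬝ᵥ z := by
  set S : Finset (Fin d) := {k | 0 < z k}
  have hp : (1 : ℝ) ≤ S.card := by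
    obtain ⟨k, hk⟩ := hpos
    exact_mod_cast Finset.card_pos.mpr ⟨k, by simpa [S] using hk⟩
  have hpd : (S.card : ℝ) ≤ d := by exact_mod_cast (by simpa using Finset.card_le_univ S)
  have hterm : ∀ k, (d + 1 - S.card) * (if k ∈ S then 1 else 0) ≤ cutFunctional d S k * z k := by
    intro k
    by_cases hk : k ∈ S
    · have : 1 ≤ z k := one_le_of_mem_intLat hz (by simpa [S] using hk)
      simp only [cutFunctional, hk, if_true]
      nlinarith
    · have : z k ≤ 0 := by simpa [S] using hk
      simp only [cutFunctional, hk, if_false]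
      nlinarith [(S.card).cast_nonneg (α := ℝ)]
  calc (d : ℝ) ≤ (d + 1 - S.card) * S.card := by nlinarith
    _ = ∑ k, ((d : ℝ) + 1 - S.card) * (if k ∈ S then 1 else 0) := by
      rw [← Finset.mul_sum, Finset.sum_boole]; simp
    _ ≤ cutFunctional d S ⬝ᵥ z := Finset.sum_le_sum fun k _ => hterm k

lemma div_le_of_mem_smul_diff_stdTerminal {l : ℝ} (hl : 0 ≤ l) {z : Fin d → ℝ}
    (hz : z ∈ intLat d) (hz0 : z ≠ 0) (hzC : z ∈ l • (stdTerminal d - stdTerminal d)) :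
    (d : ℝ) / (d + 1) ≤ l := by
  obtain ⟨_, hw, rfl⟩ := Set.mem_smul_set.mp hzC
  obtain ⟨x, hx, y, hy, rfl⟩ := Set.mem_sub.mp hw
  have key : ∀ x y, x ∈ stdTerminal d → y ∈ stdTerminal d → l • (x - y) ∈ intLat d →
      (∃ k, 0 < (l • (x - y)) k) → (d : ℝ) ≤ l * (d + 1) := fun x y hx hy hz hpos =>
    calc (d : ℝ) ≤ _ := natCast_le_cutFunctional_dotProduct hz hpos
      _ = l * (cutFunctional d _ ⬝ᵥ (x - y)) := dotProduct_smul _ _ _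
      _ ≤ l * (d + 1) := mul_le_mul_of_nonneg_left (cutFunctional_dotProduct_sub_le _ hx hy) hl
  rw [div_le_iff₀ (by positivity)]
  obtain ⟨k, hk⟩ := Function.ne_iff.mp hz0
  rcases hk.lt_or_gt with hneg | hpos
  · rw [← neg_sub, smul_neg] at hz hneg
    exact key y x hy hx (by simpa using neg_mem_intLat hz) ⟨k, by simpa using hneg⟩
  · exact key x y hx hy hz ⟨k, hpos⟩

lemma single_one_mem_stdTerminal (i : Fin d) : Pi.single i (1 : ℝ) ∈ stdTerminal d :=
  subset_convexHull ℝ _ (Or.inr ⟨i, rfl⟩)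

lemma neg_inv_smul_single_one_mem_stdTerminal (i : Fin d) :
    -((d : ℝ)⁻¹ • Pi.single i (1 : ℝ)) ∈ stdTerminal d := by
  have hd : (d : ℝ) ≠ 0 := by have := i.pos; positivity
  let vertex : Fin d → Fin d → ℝ := fun k => if k = i then fun _ => -1 else Pi.single k 1
  have hcompl : ∑ k ∈ {i}ᶜ, vertex k = ∑ k ∈ {i}ᶜ, Pi.single k 1 :=
    Finset.sum_congr rfl fun k hk => if_neg (by simpa using hk)
  have hall : ∑ k ∈ {i}ᶜ, Pi.single k (1 : ℝ) + Pi.single i 1 = fun _ => 1 := by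
    rw [← Finset.sum_singleton (fun k => Pi.single k (1 : ℝ)) i, Finset.sum_compl_add_sum]
    exact Finset.univ_sum_single fun _ => 1
  have hsum : ∑ k, vertex k = -Pi.single i 1 := by
    rw [Fintype.sum_eq_add_sum_compl i, hcompl, eq_sub_of_add_eq hall]
    ext
    simp only [vertex, if_pos, Pi.add_apply, Pi.sub_apply, Pi.neg_apply]
    ring
  have hmem := Finset.centerMass_mem_convexHull (R := ℝ) Finset.univ (w := fun _ => (d : ℝ)⁻¹)
    (fun _ _ => by positivity) (by simp [hd]) (z := vertex)
    (s := insert (fun _ => -1) (Set.range fun j : Fin d => Pi.single j 1))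
    (fun k _ => by by_cases hk : k = i <;> simp [vertex, hk])
  rwa [Finset.centerMass_eq_of_sum_1 _ _ (by simp [hd]), ← Finset.smul_sum, hsum, smul_neg] at hmem

lemma single_one_mem_smul_diff_stdTerminal (i : Fin d) :
    Pi.single i (1 : ℝ) ∈ ((d : ℝ) / (d + 1)) • (stdTerminal d - stdTerminal d) := by
  have hd : (d : ℝ) ≠ 0 := by have := i.pos; positivity
  refine Set.mem_smul_set.mpr ⟨_, Set.sub_mem_sub (single_one_mem_stdTerminal i)
    (neg_inv_smul_single_one_mem_stdTerminal i), ?_⟩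
  rw [sub_neg_eq_add, smul_add, smul_smul, ← add_smul]
  convert one_smul ℝ _
  field_simp

end

/-- **Successive minima of the difference body of the terminal simplex.** For every
`j ∈ {1,…,d}`, `λ_j(T_d - T_d, ℤ^d) = d/(d+1)`. -/
theorem succMin_diff_stdTerminal (d j : ℕ) (hj : 1 ≤ j) (hjd : j ≤ d) :
    succMin d j (stdTerminal d - stdTerminal d) = (d : ℝ) / ((d : ℝ) + 1) := by
  have hd : 0 < d := hj.trans hjd
  exact succMin_eq_of_forall_le hj (by positivity) (fun t => Pi.single (Fin.castLE hjd t) 1)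
    (fun t => single_one_mem_intLat _)
    ((Pi.linearIndependent_single_one (Fin d) ℝ).comp _ (Fin.castLE_injective hjd))
    (fun t => single_one_mem_smul_diff_stdTerminal _)
    (fun l hl z hz hz0 hzC => div_le_of_mem_smul_diff_stdTerminal hl.le hz hz0 hzC)
end

section
/- For every d ∈ ℕ, the lattice width of the standard terminal simplex T_d with respect to ℤ^d equals 2, and consequently the first covering minimum satisfies μ_1(T_d) = 1/2. -/
open scoped Pointwise

/-- The lattice width of `K ⊆ ℝ^d` with respect to `ℤ^d`: the minimum, over nonzero
integer linear functionals `c`, of `max_{p,q ∈ K} c(p - q)`. -/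
noncomputable def latticeWidth (d : ℕ) (K : Set (Fin d → ℝ)) : ℝ :=
  sInf {w : ℝ | ∃ c : Fin d → ℤ, c ≠ 0 ∧
    w = sSup {y : ℝ | ∃ p ∈ K, ∃ q ∈ K, y = ∑ j, (c j : ℝ) * (p j - q j)}}

-- ===== auxiliary development =====

def Vset (d : ℕ) : Set (Fin d → ℝ) :=
  insert (fun _ => (-1 : ℝ)) (Set.range fun j : Fin d => Pi.single j (1 : ℝ))

noncomputable def fLin {d : ℕ} (v : Fin d → ℝ) : (Fin d → ℝ) →ₗ[ℝ] ℝ :=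
  ∑ j, v j • LinearMap.proj j

lemma fLin_apply {d : ℕ} (v x : Fin d → ℝ) : fLin v x = ∑ j, v j * x j := by
  simp [fLin]

lemma fLin_single {d : ℕ} (v : Fin d → ℝ) (j : Fin d) :
    fLin v (Pi.single j (1 : ℝ)) = v j := by
  simp [fLin_apply, Pi.single_apply, mul_ite]

lemma fLin_ones {d : ℕ} (v : Fin d → ℝ) :
    fLin v (fun _ => (-1 : ℝ)) = -∑ j, v j := by
  simp [fLin_apply, Finset.sum_neg_distrib]

lemma hull_le {d : ℕ} (v : Fin d → ℝ) (a : ℝ) (h : ∀ u ∈ Vset d, fLin v u ≤ a) :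
    ∀ x ∈ stdTerminal d, fLin v x ≤ a := by
  intro x hx
  have : stdTerminal d ⊆ {y | fLin v y ≤ a} :=
    convexHull_min h (convex_halfSpace_le (fLin v).isLinear a)
  exact this hx

lemma hull_ge {d : ℕ} (v : Fin d → ℝ) (a : ℝ) (h : ∀ u ∈ Vset d, a ≤ fLin v u) :
    ∀ x ∈ stdTerminal d, a ≤ fLin v x := by
  intro x hx
  have h2 : ∀ u ∈ Vset d, fLin (-v) u ≤ -a := by
    intro u hu
    have := h u hu
    simp only [fLin_apply] at *
    simp only [Pi.neg_apply, neg_mul]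
    rw [Finset.sum_neg_distrib]
    linarith
  have := hull_le (-v) (-a) h2 x hx
  simp only [fLin_apply] at *
  rw [show ∑ j, (-v) j * x j = -∑ j, v j * x j by simp [Finset.sum_neg_distrib]] at this
  linarith

lemma vset_subset {d : ℕ} : Vset d ⊆ stdTerminal d := subset_convexHull ℝ _

-- existence of vertices with value >= 1 and <= -1 for nonzero integer functional
lemma exists_pos_neg {d : ℕ} (c : Fin d → ℤ) (hc : c ≠ 0) :
    (∃ u ∈ Vset d, 1 ≤ fLin (fun j => (c j : ℝ)) u) ∧
      (∃ w ∈ Vset d, fLin (fun j => (c j : ℝ)) w ≤ -1) := by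
  have hvj : ∀ j, fLin (fun j => (c j : ℝ)) (Pi.single j (1:ℝ)) = (c j : ℝ) := by
    intro j; rw [fLin_single]
  have hvo : fLin (fun j => (c j : ℝ)) (fun _ => (-1:ℝ)) = -((∑ j, c j : ℤ) : ℝ) := by
    rw [fLin_ones]; push_cast; ring
  have memo : (fun _ => (-1:ℝ)) ∈ Vset d := Set.mem_insert _ _
  have memj : ∀ j, Pi.single j (1:ℝ) ∈ Vset d := fun j =>
    Set.mem_insert_of_mem _ ⟨j, rfl⟩
  constructor
  · by_contra h
    push_neg at h
    have h1 : ∀ j, c j ≤ 0 := by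
      intro j
      have := h _ (memj j)
      rw [hvj] at this
      have : (c j : ℝ) < 1 := this
      have : c j < 1 := by exact_mod_cast this
      omega
    have h2 : (0:ℤ) ≤ ∑ j, c j := by
      have := h _ memo
      rw [hvo] at this
      have : (-1:ℝ) < ((∑ j, c j : ℤ) : ℝ) := by linarith
      have : (-1:ℤ) < ∑ j, c j := by exact_mod_cast this
      omega
    have h3 : ∑ j, c j ≤ 0 := Finset.sum_nonpos (fun j _ => h1 j)
    have h4 : ∑ j, c j = 0 := le_antisymm h3 h2
    have h5 : ∀ j ∈ Finset.univ, c j = 0 :=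
      (Finset.sum_eq_zero_iff_of_nonpos (fun j _ => h1 j)).mp h4
    exact hc (funext fun j => h5 j (Finset.mem_univ j))
  · by_contra h
    push_neg at h
    have h1 : ∀ j, 0 ≤ c j := by
      intro j
      have := h _ (memj j)
      rw [hvj] at this
      have : (-1:ℝ) < (c j : ℝ) := this
      have : (-1:ℤ) < c j := by exact_mod_cast this
      omega
    have h2 : ∑ j, c j ≤ 0 := by
      have := h _ memo
      rw [hvo] at this
      have : ((∑ j, c j : ℤ) : ℝ) < 1 := by linarith
      have : (∑ j, c j : ℤ) < 1 := by exact_mod_cast this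
      omega
    have h3 : (0:ℤ) ≤ ∑ j, c j := Finset.sum_nonneg (fun j _ => h1 j)
    have h4 : ∑ j, c j = 0 := le_antisymm h2 h3
    have h5 : ∀ j ∈ Finset.univ, c j = 0 :=
      (Finset.sum_eq_zero_iff_of_nonneg (fun j _ => h1 j)).mp h4
    exact hc (funext fun j => h5 j (Finset.mem_univ j))

-- intermediate value on segments inside the hull
lemma segment_val {d : ℕ} (v : Fin d → ℝ) {u w : Fin d → ℝ}
    (hu : u ∈ stdTerminal d) (hw : w ∈ stdTerminal d) {y : ℝ}
    (h1 : fLin v w ≤ y) (h2 : y ≤ fLin v u) :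
    ∃ k ∈ stdTerminal d, fLin v k = y := by
  rcases eq_or_lt_of_le (h1.trans h2) with he | hlt
  · exact ⟨w, hw, by linarith⟩
  · set t : ℝ := (y - fLin v w) / (fLin v u - fLin v w) with ht
    have hden : 0 < fLin v u - fLin v w := by linarith
    have ht0 : 0 ≤ t := div_nonneg (by linarith) hden.le
    have ht1 : t ≤ 1 := by
      rw [div_le_one hden]; linarith
    refine ⟨(1 - t) • w + t • u, ?_, ?_⟩
    · exact (convex_convexHull ℝ (Vset d)) hw hu (by linarith) ht0 (by ring)
    · rw [map_add, map_smul, map_smul, smul_eq_mul, smul_eq_mul, ht]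
      field_simp
      ring

def latVals {d : ℕ} (v : Fin d → ℝ) : AddSubgroup ℝ where
  carrier := {y | ∃ m : Fin d → ℤ, y = ∑ j, (m j : ℝ) * v j}
  zero_mem' := ⟨0, by simp⟩
  add_mem' := by
    rintro a b ⟨m, rfl⟩ ⟨m', rfl⟩
    exact ⟨m + m', by rw [← Finset.sum_add_distrib]; exact Finset.sum_congr rfl fun x _ => by push_cast [Pi.add_apply]; ring⟩
  neg_mem' := by
    rintro a ⟨m, rfl⟩
    exact ⟨-m, by rw [← Finset.sum_neg_distrib]; exact Finset.sum_congr rfl fun x _ => by push_cast [Pi.neg_apply]; ring⟩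

lemma v_mem_latVals {d : ℕ} (v : Fin d → ℝ) (j : Fin d) : v j ∈ latVals v := by
  refine ⟨Pi.single j 1, ?_⟩
  simp [Pi.single_apply, apply_ite (fun z : ℤ => (z : ℝ)), ite_mul]

-- the main covering lemma
lemma cover {d : ℕ} (hd : 1 ≤ d) (v : Fin d → ℝ) (hv : v ≠ 0) (α : ℝ) :
    ∃ k ∈ stdTerminal d, ∃ m : Fin d → ℤ,
      (1/2) * fLin v k + ∑ j, (m j : ℝ) * v j = α := by
  rcases AddSubgroup.dense_or_cyclic (latVals v) with hdense | ⟨a, ha⟩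
  · -- dense case: find vertices with distinct values
    have hex : ∃ u ∈ Vset d, ∃ w ∈ Vset d, fLin v w < fLin v u := by
      by_contra h
      push_neg at h
      have hall : ∀ u ∈ Vset d, ∀ w ∈ Vset d, fLin v u = fLin v w := by
        intro u hu w hw
        exact le_antisymm (h u hu w hw) (h w hw u hu)
      have memo : (fun _ => (-1:ℝ)) ∈ Vset d := Set.mem_insert _ _
      have memj : ∀ j, Pi.single j (1:ℝ) ∈ Vset d := fun j =>
        Set.mem_insert_of_mem _ ⟨j, rfl⟩
      have hj : ∀ j, v j = -∑ i, v i := by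
        intro j
        have := hall _ (memj j) _ memo
        rwa [fLin_single, fLin_ones] at this
      have hsum : ∑ i, v i = (d : ℝ) * (-∑ i, v i) := by
        calc ∑ i, v i = ∑ i : Fin d, (-∑ i, v i) := Finset.sum_congr rfl (fun i _ => hj i)
        _ = (d : ℝ) * (-∑ i, v i) := by simp [mul_comm]
      have hS : ∑ i, v i = 0 := by
        have hd0 : (0:ℝ) ≤ (d:ℝ) := Nat.cast_nonneg d
        nlinarith [hsum]
      exact hv (funext fun j => by rw [hj j, hS, neg_zero]; rfl)
    obtain ⟨u, hu, w, hw, hlt⟩ := hex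
    have hne : (Set.Ioo (α - fLin v u / 2) (α - fLin v w / 2)).Nonempty := by
      exact ⟨α - fLin v u / 2 + (fLin v u - fLin v w)/4, by constructor <;> linarith⟩
    obtain ⟨g, hgG, hg⟩ := hdense.exists_mem_open isOpen_Ioo hne
    obtain ⟨hg1, hg2⟩ := hg
    obtain ⟨k, hk, hfk⟩ := segment_val v (vset_subset hu) (vset_subset hw)
      (y := 2*(α - g)) (by linarith) (by linarith)
    obtain ⟨m, hm⟩ := hgG
    exact ⟨k, hk, m, by rw [hfk, ← hm]; ring⟩
  · -- cyclic case
    have ha0 : a ≠ 0 := by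
      rintro rfl
      refine hv (funext fun j => ?_)
      have := v_mem_latVals v j
      rw [ha, AddSubgroup.mem_closure_singleton] at this
      obtain ⟨n, hn⟩ := this
      simpa using hn.symm
    have hc : ∀ j, ∃ n : ℤ, (n : ℝ) * a = v j := by
      intro j
      have := v_mem_latVals v j
      rw [ha, AddSubgroup.mem_closure_singleton] at this
      obtain ⟨n, hn⟩ := this
      exact ⟨n, by rw [← hn, zsmul_eq_mul]⟩
    choose c hcv using hc
    have hcne : c ≠ 0 := by
      rintro rfl
      exact hv (funext fun j => by rw [← hcv j]; simp)
    obtain ⟨⟨u, hu, hcu⟩, ⟨w, hw, hcw⟩⟩ := exists_pos_neg c hcne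
    have hrel : ∀ x, fLin v x = a * fLin (fun j => (c j : ℝ)) x := by
      intro x
      rw [fLin_apply, fLin_apply, Finset.mul_sum]
      exact Finset.sum_congr rfl fun j _ => by rw [← hcv j]; ring
    set n : ℤ := round (α / a) with hn
    set β : ℝ := α - n * a with hβ
    have hβle : |β| ≤ |a| / 2 := by
      have h1 : |α / a - round (α / a)| ≤ 1/2 := abs_sub_round _
      have h2 : β = a * (α / a - n) := by rw [hβ]; field_simp
      rw [h2, abs_mul]
      calc |a| * |α / a - ↑n| ≤ |a| * (1/2) := by
            exact mul_le_mul_of_nonneg_left (by rw [hn]; exact h1) (abs_nonneg a)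
        _ = |a| / 2 := by ring
    have habs := abs_le.mp hβle
    obtain ⟨k, hk, hfk⟩ : ∃ k ∈ stdTerminal d, fLin v k = 2 * β := by
      rcases lt_or_gt_of_ne ha0 with hneg | hpos
      · have hau : fLin v u ≤ a := by
          rw [hrel u]; nlinarith
        have haw : -a ≤ fLin v w := by
          rw [hrel w]; nlinarith
        have habs' : |a| = -a := abs_of_neg hneg
        exact segment_val v (vset_subset hw) (vset_subset hu) (by linarith [habs.1, habs.2])
          (by linarith [habs.1, habs.2])
      · have hau : a ≤ fLin v u := by
          rw [hrel u]; nlinarith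
        have haw : fLin v w ≤ -a := by
          rw [hrel w]; nlinarith
        have habs' : |a| = a := abs_of_pos hpos
        exact segment_val v (vset_subset hu) (vset_subset hw) (by linarith [habs.1, habs.2])
          (by linarith [habs.1, habs.2])
    have haG : a ∈ latVals v := by
      rw [ha]
      exact AddSubgroup.mem_closure_singleton.mpr ⟨1, one_zsmul a⟩
    obtain ⟨m₀, hm₀⟩ := haG
    refine ⟨k, hk, fun j => n * m₀ j, ?_⟩
    have : ∑ j, ((n * m₀ j : ℤ) : ℝ) * v j = (n : ℝ) * a := by
      rw [hm₀, Finset.mul_sum]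
      exact Finset.sum_congr rfl fun j _ => by push_cast; ring
    rw [hfk, this, hβ]
    ring

lemma yform {d : ℕ} (c : Fin d → ℤ) (p q : Fin d → ℝ) :
    ∑ j, (c j : ℝ) * (p j - q j)
      = fLin (fun j => (c j : ℝ)) p - fLin (fun j => (c j : ℝ)) q := by
  rw [fLin_apply, fLin_apply, ← Finset.sum_sub_distrib]
  exact Finset.sum_congr rfl fun j _ => by ring

lemma vertex_abs_bound {d : ℕ} (c : Fin d → ℤ) :
    ∀ u ∈ Vset d, |fLin (fun j => (c j : ℝ)) u|
      ≤ (∑ j, |(c j : ℝ)|) + |∑ j, (c j : ℝ)| := by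
  rintro u (rfl | ⟨j, rfl⟩)
  · rw [fLin_ones, abs_neg]
    have : (0:ℝ) ≤ ∑ j, |(c j : ℝ)| := Finset.sum_nonneg fun j _ => abs_nonneg _
    linarith
  · rw [fLin_single]
    have h1 : |(c j : ℝ)| ≤ ∑ i, |(c i : ℝ)| :=
      Finset.single_le_sum (fun i _ => abs_nonneg ((c i : ℝ))) (Finset.mem_univ j)
    have : (0:ℝ) ≤ |∑ j, (c j : ℝ)| := abs_nonneg _
    linarith

lemma Yc_bddAbove {d : ℕ} (c : Fin d → ℤ) :
    BddAbove {y : ℝ | ∃ p ∈ stdTerminal d, ∃ q ∈ stdTerminal d,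
      y = ∑ j, (c j : ℝ) * (p j - q j)} := by
  set B : ℝ := (∑ j, |(c j : ℝ)|) + |∑ j, (c j : ℝ)| with hB
  refine ⟨2 * B, ?_⟩
  rintro y ⟨p, hp, q, hq, rfl⟩
  rw [yform]
  have h1 := hull_le (fun j => (c j : ℝ)) B
    (fun u hu => (abs_le.mp (vertex_abs_bound c u hu)).2) p hp
  have h2 := hull_ge (fun j => (c j : ℝ)) (-B)
    (fun u hu => (abs_le.mp (vertex_abs_bound c u hu)).1) q hq
  linarith

lemma width_lower {d : ℕ} (c : Fin d → ℤ) (hc : c ≠ 0) :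
    2 ≤ sSup {y : ℝ | ∃ p ∈ stdTerminal d, ∃ q ∈ stdTerminal d,
      y = ∑ j, (c j : ℝ) * (p j - q j)} := by
  obtain ⟨⟨u, hu, hcu⟩, ⟨w, hw, hcw⟩⟩ := exists_pos_neg c hc
  have hy : fLin (fun j => (c j : ℝ)) u - fLin (fun j => (c j : ℝ)) w
      ∈ {y : ℝ | ∃ p ∈ stdTerminal d, ∃ q ∈ stdTerminal d,
        y = ∑ j, (c j : ℝ) * (p j - q j)} :=
    ⟨u, vset_subset hu, w, vset_subset hw, (yform c u w).symm⟩
  calc (2:ℝ) ≤ fLin (fun j => (c j : ℝ)) u - fLin (fun j => (c j : ℝ)) w := by linarith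
    _ ≤ _ := le_csSup (Yc_bddAbove c) hy

lemma width_two {d : ℕ} (hd : 1 ≤ d) : latticeWidth d (stdTerminal d) = 2 := by
  set j0 : Fin d := ⟨0, hd⟩
  set c : Fin d → ℤ := Pi.single j0 1 with hc
  have hcast : ∀ j, ((c j : ℤ) : ℝ) = if j = j0 then 1 else 0 := by
    intro j
    rw [hc, Pi.single_apply]
    split <;> simp
  have hcne : c ≠ 0 := by
    intro h
    have := congrFun h j0
    simp [hc] at this
  have hmem : (2:ℝ) ∈ {w : ℝ | ∃ c : Fin d → ℤ, c ≠ 0 ∧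
      w = sSup {y : ℝ | ∃ p ∈ stdTerminal d, ∃ q ∈ stdTerminal d,
        y = ∑ j, (c j : ℝ) * (p j - q j)}} := by
    refine ⟨c, hcne, ?_⟩
    symm
    apply IsGreatest.csSup_eq
    constructor
    · refine ⟨Pi.single j0 1, vset_subset (Set.mem_insert_of_mem _ ⟨j0, rfl⟩),
        (fun _ => (-1:ℝ)), vset_subset (Set.mem_insert _ _), ?_⟩
      have hf := yform c (Pi.single j0 1) (fun _ => (-1:ℝ))
      rw [fLin_single, fLin_ones, hcast j0] at hf
      rw [hf]
      simp [Finset.sum_ite_eq', hcast]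
      norm_num
    · rintro y ⟨p, hp, q, hq, rfl⟩
      rw [yform]
      have hub : ∀ u ∈ Vset d, fLin (fun j => (c j : ℝ)) u ≤ 1 := by
        rintro u (rfl | ⟨j, rfl⟩)
        · rw [fLin_ones]
          simp [Finset.sum_ite_eq', hcast]
        · rw [fLin_single, hcast]
          split <;> norm_num
      have hlb : ∀ u ∈ Vset d, -1 ≤ fLin (fun j => (c j : ℝ)) u := by
        rintro u (rfl | ⟨j, rfl⟩)
        · rw [fLin_ones]
          simp [Finset.sum_ite_eq', hcast]
        · rw [fLin_single, hcast]
          split <;> norm_num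
      have h1 := hull_le _ 1 hub p hp
      have h2 := hull_ge _ (-1) hlb q hq
      linarith
  apply IsLeast.csInf_eq
  exact ⟨hmem, fun w ⟨c', hc', hw⟩ => hw ▸ width_lower c' hc'⟩

lemma fLin_single_gen {d : ℕ} (v : Fin d → ℝ) (j : Fin d) (t : ℝ) :
    fLin v (Pi.single j t) = v j * t := by
  simp [fLin_apply, Pi.single_apply, mul_ite]

lemma finrank_ker {d : ℕ} (v : Fin d → ℝ) (hv : v ≠ 0) :
    Module.finrank ℝ (LinearMap.ker (fLin v)) = d - 1 := by
  have hsurj : Function.Surjective (fLin v) := by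
    obtain ⟨j, hj⟩ : ∃ j, v j ≠ 0 := by
      by_contra h; push_neg at h; exact hv (funext h)
    intro r
    exact ⟨Pi.single j (r / v j), by rw [fLin_single_gen]; field_simp⟩
  have hr : LinearMap.range (fLin v) = ⊤ := LinearMap.range_eq_top.mpr hsurj
  have h := LinearMap.finrank_range_add_finrank_ker (fLin v)
  rw [hr, finrank_top, Module.finrank_self, Module.finrank_fin_fun] at h
  omega

lemma single_ne_zero' {d : ℕ} (j0 : Fin d) : (Pi.single j0 (1:ℝ) : Fin d → ℝ) ≠ 0 := by
  intro h
  have := congrFun h j0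
  simp at this

lemma fLin_single_coord {d : ℕ} (j0 : Fin d) (x : Fin d → ℝ) :
    fLin (Pi.single j0 (1:ℝ)) x = x j0 := by
  simp [fLin_apply, Pi.single_apply, ite_mul]

lemma covMin_val {d : ℕ} (hd : 1 ≤ d) :
    covMin 1 (stdTerminal d) (intLat d) = 1 / 2 := by
  apply IsLeast.csInf_eq
  constructor
  · -- 1/2 is a member
    refine ⟨by norm_num, ?_⟩
    rintro U ⟨p, hp⟩ hU
    rw [Module.finrank_fin_fun] at hU
    set V := U.direction with hV
    have hVne : V ≠ ⊤ := by
      intro h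
      rw [h, finrank_top, Module.finrank_fin_fun] at hU
      omega
    obtain ⟨φ, hφne, hφmap⟩ :=
      Submodule.exists_dual_map_eq_bot_of_lt_top (lt_top_iff_ne_top.mpr hVne) inferInstance
    set v : Fin d → ℝ := fun j => φ (Pi.single j 1) with hv
    have hφ : ∀ x, φ x = fLin v x := by
      intro x
      rw [LinearMap.pi_apply_eq_sum_univ φ x, fLin_apply]
      refine Finset.sum_congr rfl fun j _ => ?_
      have hb : (fun i => if j = i then (1:ℝ) else 0) = Pi.single j 1 :=
        funext fun i => by rw [Pi.single_apply]; exact if_congr eq_comm rfl rfl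
      rw [smul_eq_mul, hb, hv]
      ring
    have hvne : v ≠ 0 := by
      intro h
      apply hφne
      refine LinearMap.ext fun x => ?_
      rw [hφ x, h]
      simp [fLin_apply]
    have hle : V ≤ LinearMap.ker (fLin v) := by
      intro x hx
      have : φ x ∈ Submodule.map φ V := Submodule.mem_map_of_mem hx
      rw [hφmap, Submodule.mem_bot] at this
      rw [LinearMap.mem_ker, ← hφ, this]
    have hVeq : V = LinearMap.ker (fLin v) :=
      Submodule.eq_of_le_of_finrank_le hle (by rw [finrank_ker v hvne, hU])
    obtain ⟨k, hk, m, hkm⟩ := cover hd v hvne (fLin v p)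
    set z : Fin d → ℝ := fun j => (m j : ℝ) with hz
    have hzL : z ∈ intLat d := fun j => ⟨m j, rfl⟩
    refine ⟨(1/2 : ℝ) • k + z, ?_, ?_⟩
    · exact Set.add_mem_add (Set.smul_mem_smul_set hk) hzL
    · have hfz : fLin v z = ∑ j, (m j : ℝ) * v j := by
        rw [fLin_apply]
        exact Finset.sum_congr rfl fun j _ => by ring
      have hfx : fLin v ((1/2 : ℝ) • k + z) = fLin v p := by
        rw [map_add, map_smul, smul_eq_mul, hfz, ← hkm]
      have hmem : ((1/2 : ℝ) • k + z) - p ∈ V := by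
        rw [hVeq, LinearMap.mem_ker, map_sub, hfx, sub_self]
      have := AffineSubspace.vadd_mem_of_mem_direction (hV ▸ hmem) hp
      simpa using this
  · -- lower bound
    rintro μ ⟨hμ0, hμ⟩
    set j0 : Fin d := ⟨0, hd⟩
    set v : Fin d → ℝ := Pi.single j0 1 with hv
    set U : AffineSubspace ℝ (Fin d → ℝ) :=
      AffineSubspace.mk' (Pi.single j0 (1/2 : ℝ)) (LinearMap.ker (fLin v)) with hU
    have hUne : (U : Set (Fin d → ℝ)).Nonempty :=
      ⟨_, AffineSubspace.self_mem_mk' _ _⟩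
    have hUdir : Module.finrank ℝ U.direction = Module.finrank ℝ (Fin d → ℝ) - 1 := by
      rw [hU, AffineSubspace.direction_mk', finrank_ker v (single_ne_zero' j0),
        Module.finrank_fin_fun]
    obtain ⟨x, hxmem, hxU⟩ := hμ U hUne hUdir
    obtain ⟨y, hy, z, hzL, rfl⟩ := Set.mem_add.mp hxmem
    obtain ⟨k, hk, rfl⟩ := Set.mem_smul_set.mp hy
    have hfx : fLin v (μ • k + z) = 1/2 := by
      have h1 : (μ • k + z) -ᵥ (Pi.single j0 (1/2 : ℝ)) ∈ LinearMap.ker (fLin v) :=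
        (AffineSubspace.mem_mk').mp hxU
      rw [vsub_eq_sub, LinearMap.mem_ker, map_sub, sub_eq_zero] at h1
      rw [h1, fLin_single_coord]
      simp
    obtain ⟨n, hn⟩ := hzL j0
    have hfz : fLin v z = (n : ℝ) := by rw [fLin_single_coord, hn]
    have hfk1 : fLin v k ≤ 1 := by
      refine hull_le v 1 ?_ k hk
      rintro u (rfl | ⟨j, rfl⟩)
      · rw [fLin_ones]; simp [hv, Pi.single_apply, Finset.sum_ite_eq']
      · rw [fLin_single, hv, Pi.single_apply]; split <;> norm_num
    have hfk2 : -1 ≤ fLin v k := by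
      refine hull_ge v (-1) ?_ k hk
      rintro u (rfl | ⟨j, rfl⟩)
      · rw [fLin_ones]; simp [hv, Pi.single_apply, Finset.sum_ite_eq']
      · rw [fLin_single, hv, Pi.single_apply]; split <;> norm_num
    have heq : μ * fLin v k + (n : ℝ) = 1/2 := by
      rw [← hfz, ← smul_eq_mul, ← map_smul, ← map_add, hfx]
    rcases le_or_gt (n : ℝ) 0 with hn0 | hn0
    · nlinarith
    · have : (1:ℤ) ≤ n := by exact_mod_cast hn0
      have : (1:ℝ) ≤ (n:ℝ) := by exact_mod_cast this
      nlinarith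

/-- **Lattice width of the terminal simplex.** For every `d ≥ 1`, the lattice width of
`T_d` equals `2`, and consequently `μ_1(T_d) = 1/2`. -/
theorem latticeWidth_stdTerminal (d : ℕ) (hd : 1 ≤ d) :
    latticeWidth d (stdTerminal d) = 2 ∧
      covMin 1 (stdTerminal d) (intLat d) = 1 / 2 :=
  ⟨width_two hd, covMin_val hd⟩
end
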